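/- arXiv:1612.07250 — 10 statements merged into one kernel-verified Lean document; each statement's English description precedes it below -/
import Mathlib

section
/- Let N ≥ 1, η ∈ [0,1], and let n̂_1, …, n̂_N be unit vectors in ℝ³. For each k ∈ {1,…,N} let M_k be the noisy qubit POVM with elements E^k_{X_k} = ½ I + ½ η X_k σ·n̂_k, X_k ∈ {+1,−1}. For each sign string X = (X_1,…,X_N) ∈ {+1,−1}^N set m_X := Σ_{k=1}^N X_k n̂_k ∈ ℝ³. Then: (i) (necessity) if M_1, …, M_N are jointly measurable then η ≤ (1/N) · max_{X ∈ {±1}^N} |m_X|; and (ii) (sufficiency) if η ≤ 2^N / (Σ_{X ∈ {±1}^N} |m_X|) then M_1, …, M_N are jointly measurable. -/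
open scoped BigOperators ComplexOrder

/-- The Pauli vector `σ·n = n_x σ_x + n_y σ_y + n_z σ_z`. -/
noncomputable def sigmaDot (v : EuclideanSpace ℝ (Fin 3)) : Matrix (Fin 2) (Fin 2) ℂ :=
  (v 0 : ℂ) • (!![0, 1; 1, 0] : Matrix (Fin 2) (Fin 2) ℂ) +
    (v 1 : ℂ) • (!![0, -Complex.I; Complex.I, 0] : Matrix (Fin 2) (Fin 2) ℂ) +
    (v 2 : ℂ) • (!![1, 0; 0, -1] : Matrix (Fin 2) (Fin 2) ℂ)

/-- The sign `+1`/`-1` encoded by a Boolean. -/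
noncomputable def sgn (b : Bool) : ℝ := if b then 1 else -1

/-- The noisy qubit POVM element `E^k_X = ½ I + ½ η X σ·n̂`. -/
noncomputable def noisyQubitEffect (η : ℝ) (v : EuclideanSpace ℝ (Fin 3)) (b : Bool) :
    Matrix (Fin 2) (Fin 2) ℂ :=
  ((1 : ℂ) / 2) • (1 : Matrix (Fin 2) (Fin 2) ℂ) + (((η * sgn b) / 2 : ℝ) : ℂ) • sigmaDot v

/-- Joint measurability of a family of binary-outcome qubit POVMs. -/
def JointlyMeasurable {N : ℕ} (M : Fin N → Bool → Matrix (Fin 2) (Fin 2) ℂ) : Prop :=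
  ∃ J : (Fin N → Bool) → Matrix (Fin 2) (Fin 2) ℂ,
    (∀ f, (J f).PosSemidef) ∧ (∑ f, J f = 1) ∧
      ∀ k b, ∑ f ∈ Finset.univ.filter (fun f => f k = b), J f = M k b

/-- `m_X = Σ_k X_k n̂_k`. -/
noncomputable def mvec {N : ℕ} (nhat : Fin N → EuclideanSpace ℝ (Fin 3))
    (X : Fin N → Bool) : EuclideanSpace ℝ (Fin 3) :=
  ∑ k, sgn (X k) • nhat k

@[simp] lemma sgn_true : sgn true = 1 := rfl
@[simp] lemma sgn_false : sgn false = -1 := rfl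
@[simp] lemma sgn_not (b : Bool) : sgn (!b) = -sgn b := by cases b <;> simp [sgn]

/-- A 2×2 Hermitian-form matrix with nonnegative diagonal and dominated off-diagonal
is positive semidefinite. -/
lemma psd2 (a d : ℝ) (b : ℂ) (ha : 0 ≤ a) (hd : 0 ≤ d) (hb : Complex.normSq b ≤ a * d) :
    (!![(a : ℂ), b; (starRingEnd ℂ) b, (d : ℂ)]).PosSemidef := by
  refine Matrix.posSemidef_iff_dotProduct_mulVec.2 ⟨?_, ?_⟩
  · ext i j
    fin_cases i <;> fin_cases j <;>
      simp [Matrix.conjTranspose_apply, Complex.conj_ofReal]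
  · intro x
    have hx : dotProduct (star x)
          ((!![(a : ℂ), b; (starRingEnd ℂ) b, (d : ℂ)]).mulVec x)
        = (starRingEnd ℂ) (x 0) * ((a : ℂ) * x 0 + b * x 1)
          + (starRingEnd ℂ) (x 1) * ((starRingEnd ℂ) b * x 0 + (d : ℂ) * x 1) := by
      simp [Matrix.mulVec, dotProduct, Fin.sum_univ_two]
    rw [hx, Complex.le_def]
    obtain ⟨p, q⟩ := x 0
    obtain ⟨r, s⟩ := x 1
    obtain ⟨u, v⟩ := b
    simp only [Complex.normSq_mk] at hb
    constructor
    · simp [Complex.mul_re, Complex.mul_im]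
      rcases eq_or_lt_of_le hd with hd0 | hd0
      · have hu0 : u = 0 := by nlinarith [sq_nonneg u, sq_nonneg v]
        have hv0 : v = 0 := by nlinarith [sq_nonneg u, sq_nonneg v]
        subst hu0 hv0
        nlinarith [sq_nonneg p, sq_nonneg q, sq_nonneg r, sq_nonneg s]
      · nlinarith [sq_nonneg (d * r + (p * u + q * v)), sq_nonneg (d * s + (q * u - p * v)),
          mul_nonneg (sub_nonneg.2 hb) (add_nonneg (sq_nonneg p) (sq_nonneg q))]
    · simp [Complex.mul_re, Complex.mul_im]
      ring

/-- Entrywise facts extracted from positive semidefiniteness of a 2×2 matrix. -/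
lemma psd2' {A : Matrix (Fin 2) (Fin 2) ℂ} (h : A.PosSemidef) :
    0 ≤ (A 0 0).re ∧ 0 ≤ (A 1 1).re ∧ (A 0 0).im = 0 ∧ (A 1 1).im = 0 ∧
      A 1 0 = (starRingEnd ℂ) (A 0 1) ∧
      Complex.normSq (A 0 1) ≤ (A 0 0).re * (A 1 1).re := by
  have herm : A 1 0 = (starRingEnd ℂ) (A 0 1) := by
    have := congrFun (congrFun h.1 1) 0
    simpa [Matrix.conjTranspose_apply] using this.symm
  have hq : ∀ x : Fin 2 → ℂ,
      0 ≤ (starRingEnd ℂ) (x 0) * (A 0 0 * x 0 + A 0 1 * x 1)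
        + (starRingEnd ℂ) (x 1) * (A 1 0 * x 0 + A 1 1 * x 1) := by
    intro x
    have hx : dotProduct (star x) (A.mulVec x)
        = (starRingEnd ℂ) (x 0) * (A 0 0 * x 0 + A 0 1 * x 1)
          + (starRingEnd ℂ) (x 1) * (A 1 0 * x 0 + A 1 1 * x 1) := by
      simp [Matrix.mulVec, dotProduct, Fin.sum_univ_two]
    rw [← hx]; exact (Matrix.posSemidef_iff_dotProduct_mulVec.1 h).2 x
  have h00 := hq ![1, 0]
  have h11 := hq ![0, 1]
  simp [Complex.le_def] at h00 h11
  refine ⟨h00.1, h11.1, h00.2.symm, h11.2.symm, herm, ?_⟩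
  set a : ℝ := (A 0 0).re with ha
  set d : ℝ := (A 1 1).re with hd
  have hA00 : A 0 0 = (a : ℂ) := Complex.ext rfl (by simp [← h00.2])
  have hA11 : A 1 1 = (d : ℂ) := Complex.ext rfl (by simp [← h11.2])
  rcases eq_or_lt_of_le h11.1 with hd0 | hd0
  · have hQ := hq ![-(A 0 1), ((a + 2 : ℝ) : ℂ)]
    rw [Complex.le_def] at hQ
    have hre := hQ.1
    simp [hA00, hA11, herm, Complex.mul_re, Complex.mul_im, Complex.normSq_apply] at hre ⊢
    nlinarith [h00.1, hre, sq_nonneg (A 0 1).re, sq_nonneg (A 0 1).im]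
  · have hQ := hq ![A 0 1 * ((-d : ℝ) : ℂ), ((Complex.normSq (A 0 1) : ℝ) : ℂ)]
    rw [Complex.le_def] at hQ
    have hre := hQ.1
    by_contra hlt
    push_neg at hlt
    have hb0 : 0 < Complex.normSq (A 0 1) :=
      lt_of_le_of_lt (mul_nonneg h00.1 h11.1) hlt
    simp [hA00, hA11, herm, Complex.mul_re, Complex.mul_im, Complex.normSq_apply] at hre hlt hb0
    nlinarith [hre, mul_pos (mul_pos hd0 hb0) (sub_pos.2 hlt)]

lemma mvec_apply {N : ℕ} (nhat : Fin N → EuclideanSpace ℝ (Fin 3)) (X : Fin N → Bool)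
    (j : Fin 3) : mvec nhat X j = ∑ k, sgn (X k) * nhat k j := by
  rw [mvec]
  induction (Finset.univ : Finset (Fin N)) using Finset.cons_induction with
  | empty => simp
  | cons a s ha ih => rw [Finset.sum_cons, Finset.sum_cons, ← ih]; rfl

lemma mvec_flip {N : ℕ} (nhat : Fin N → EuclideanSpace ℝ (Fin 3)) (X : Fin N → Bool) :
    mvec nhat (fun j => !(X j)) = -mvec nhat X := by
  rw [mvec, mvec, ← Finset.sum_neg_distrib]
  exact Finset.sum_congr rfl fun k _ => by rw [sgn_not, neg_smul]

lemma euclid_norm_sq (x : EuclideanSpace ℝ (Fin 3)) :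
    ‖x‖ ^ 2 = x 0 ^ 2 + x 1 ^ 2 + x 2 ^ 2 := by
  rw [EuclideanSpace.norm_eq, Real.sq_sqrt (by positivity)]
  simp [Fin.sum_univ_three, sq_abs]

lemma comp_sq_le (x : EuclideanSpace ℝ (Fin 3)) (j : Fin 3) : x j ^ 2 ≤ ‖x‖ ^ 2 := by
  rw [euclid_norm_sq]
  have h0 := sq_nonneg (x 0)
  have h1 := sq_nonneg (x 1)
  have h2 := sq_nonneg (x 2)
  fin_cases j
  · show x 0 ^ 2 ≤ x 0 ^ 2 + x 1 ^ 2 + x 2 ^ 2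
    linarith
  · show x 1 ^ 2 ≤ x 0 ^ 2 + x 1 ^ 2 + x 2 ^ 2
    linarith
  · show x 2 ^ 2 ≤ x 0 ^ 2 + x 1 ^ 2 + x 2 ^ 2
    linarith

lemma card_filter_bool {N : ℕ} (hN : 1 ≤ N) (k : Fin N) (b : Bool) :
    (Finset.univ.filter (fun f : Fin N → Bool => f k = b)).card = 2 ^ (N - 1) := by
  have hbij : ∀ b' : Bool,
      (Finset.univ.filter (fun f : Fin N → Bool => f k = b')).card
        = (Finset.univ.filter (fun f : Fin N → Bool => f k = !b')).card := by
    intro b'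
    apply Finset.card_nbij' (i := fun f => Function.update f k (!(f k)))
      (j := fun f => Function.update f k (!(f k)))
    · intro f hf
      simp only [Finset.mem_coe, Finset.mem_filter, Finset.mem_univ, true_and] at hf ⊢
      simp [hf]
    · intro f hf
      simp only [Finset.mem_coe, Finset.mem_filter, Finset.mem_univ, true_and] at hf ⊢
      simp [hf]
    · intro f hf
      funext j
      rcases eq_or_ne j k with rfl | hj
      · simp
      · simp [Function.update_of_ne hj]
    · intro f hf
      funext j
      rcases eq_or_ne j k with rfl | hj
      · simp
      · simp [Function.update_of_ne hj]
  have htot : (Finset.univ.filter (fun f : Fin N → Bool => f k = true)).card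
      + (Finset.univ.filter (fun f : Fin N → Bool => f k = false)).card = 2 ^ N := by
    have := Finset.card_filter_add_card_filter_not
      (s := (Finset.univ : Finset (Fin N → Bool))) (p := fun f => f k = true)
    simp only [Bool.not_eq_true] at this
    rw [this]
    simp [Finset.card_univ]
  have h2 : 2 ^ N = 2 ^ (N - 1) * 2 := by
    have hNe : N = (N - 1) + 1 := (Nat.succ_pred_eq_of_pos hN).symm
    rw [hNe, pow_succ, Nat.add_sub_cancel]
  have hb' := hbij true
  simp only [Bool.not_true] at hb'
  have hx : (Finset.univ.filter (fun f : Fin N → Bool => f k = true)).card = 2 ^ (N - 1) := by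
    have : 2 ^ (N - 1) * 2
        = (Finset.univ.filter (fun f : Fin N → Bool => f k = true)).card * 2 := by
      rw [← h2, ← htot, hb']; ring
    exact (Nat.eq_of_mul_eq_mul_right (by norm_num) this).symm
  cases b
  · rw [← hb', hx]
  · exact hx

lemma sum_sgn_filter {N : ℕ} (hN : 1 ≤ N) (k j : Fin N) (b : Bool) :
    ∑ f ∈ Finset.univ.filter (fun f : Fin N → Bool => f k = b), sgn (f j)
      = if j = k then sgn b * 2 ^ (N - 1) else 0 := by
  rcases eq_or_ne j k with rfl | hj
  · rw [if_pos rfl]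
    have hc : ∀ f ∈ Finset.univ.filter (fun f : Fin N → Bool => f j = b),
        sgn (f j) = sgn b := by
      intro f hf
      simp only [Finset.mem_filter] at hf
      rw [hf.2]
    rw [Finset.sum_congr rfl hc, Finset.sum_const, card_filter_bool hN j b, nsmul_eq_mul,
      mul_comm]
    push_cast
    ring
  · rw [if_neg hj]
    apply Finset.sum_involution (g := fun f _ => Function.update f j (!(f j)))
    · intro f hf
      simp
    · intro f hf hne heq
      simpa using congrFun heq j
    · intro f hf
      funext l
      rcases eq_or_ne l j with rfl | hl
      · simp
      · simp [Function.update_of_ne hl]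
    · intro f hf
      simp only [Finset.mem_filter, Finset.mem_univ, true_and] at hf ⊢
      rwa [Function.update_of_ne (fun h : k = j => hj h.symm)]

lemma sum_mvec_comp {N : ℕ} (hN : 1 ≤ N) (nhat : Fin N → EuclideanSpace ℝ (Fin 3))
    (k : Fin N) (b : Bool) (j : Fin 3) :
    ∑ f ∈ Finset.univ.filter (fun f : Fin N → Bool => f k = b), mvec nhat f j
      = sgn b * 2 ^ (N - 1) * nhat k j := by
  have h1 : ∀ f : Fin N → Bool, mvec nhat f j = ∑ l, sgn (f l) * nhat l j :=
    fun f => mvec_apply nhat f j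
  rw [Finset.sum_congr rfl (fun f _ => h1 f), Finset.sum_comm]
  have h2 : ∀ l : Fin N,
      ∑ f ∈ Finset.univ.filter (fun f : Fin N → Bool => f k = b), sgn (f l) * nhat l j
        = (if l = k then sgn b * 2 ^ (N - 1) else 0) * nhat l j := by
    intro l
    rw [← Finset.sum_mul, sum_sgn_filter hN k l b]
  rw [Finset.sum_congr rfl (fun l _ => h2 l)]
  simp only [ite_mul, zero_mul]
  rw [Finset.sum_ite_eq' Finset.univ k (fun l => sgn b * 2 ^ (N - 1) * nhat l j)]
  simp

lemma sum_norm_filter {N : ℕ} (hN : 1 ≤ N) (nhat : Fin N → EuclideanSpace ℝ (Fin 3))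
    (k : Fin N) (b : Bool) :
    ∑ f ∈ Finset.univ.filter (fun f : Fin N → Bool => f k = b), ‖mvec nhat f‖
      = (∑ f : Fin N → Bool, ‖mvec nhat f‖) / 2 := by
  have hbij : ∀ b' : Bool,
      ∑ f ∈ Finset.univ.filter (fun f : Fin N → Bool => f k = b'), ‖mvec nhat f‖
        = ∑ f ∈ Finset.univ.filter (fun f : Fin N → Bool => f k = !b'), ‖mvec nhat f‖ := by
    intro b'
    apply Finset.sum_nbij' (i := fun f => fun l => !(f l)) (j := fun f => fun l => !(f l))
    · intro f hf
      simp only [Finset.mem_filter, Finset.mem_univ, true_and] at hf ⊢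
      simp [hf]
    · intro f hf
      simp only [Finset.mem_filter, Finset.mem_univ, true_and] at hf ⊢
      simp [hf]
    · intro f hf
      funext l
      simp
    · intro f hf
      funext l
      simp
    · intro f hf
      rw [mvec_flip, norm_neg]
  have htot : ∑ f ∈ Finset.univ.filter (fun f : Fin N → Bool => f k = true), ‖mvec nhat f‖
      + ∑ f ∈ Finset.univ.filter (fun f : Fin N → Bool => f k = false), ‖mvec nhat f‖
      = ∑ f : Fin N → Bool, ‖mvec nhat f‖ := by
    have := Finset.sum_filter_add_sum_filter_not (Finset.univ : Finset (Fin N → Bool))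
      (fun f => f k = true) (fun f => ‖mvec nhat f‖)
    simp only [Bool.not_eq_true] at this
    exact this
  have hb' := hbij true
  simp only [Bool.not_true] at hb'
  cases b
  · rw [← hb']; linarith
  · linarith


lemma noisy00 (η : ℝ) (v : EuclideanSpace ℝ (Fin 3)) (b : Bool) :
    noisyQubitEffect η v b 0 0 = ((1 / 2 + η * sgn b / 2 * v 2 : ℝ) : ℂ) := by
  simp [noisyQubitEffect, sigmaDot, Matrix.add_apply, Matrix.smul_apply, Matrix.one_apply]

lemma noisy11 (η : ℝ) (v : EuclideanSpace ℝ (Fin 3)) (b : Bool) :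
    noisyQubitEffect η v b 1 1 = ((1 / 2 - η * sgn b / 2 * v 2 : ℝ) : ℂ) := by
  simp [noisyQubitEffect, sigmaDot, Matrix.add_apply, Matrix.smul_apply, Matrix.one_apply]
  ring

lemma noisy01 (η : ℝ) (v : EuclideanSpace ℝ (Fin 3)) (b : Bool) :
    noisyQubitEffect η v b 0 1
      = ((η * sgn b / 2 * v 0 : ℝ) : ℂ) - ((η * sgn b / 2 * v 1 : ℝ) : ℂ) * Complex.I := by
  simp [noisyQubitEffect, sigmaDot, Matrix.add_apply, Matrix.smul_apply, Matrix.one_apply]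
  ring

lemma noisy10 (η : ℝ) (v : EuclideanSpace ℝ (Fin 3)) (b : Bool) :
    noisyQubitEffect η v b 1 0
      = ((η * sgn b / 2 * v 0 : ℝ) : ℂ) + ((η * sgn b / 2 * v 1 : ℝ) : ℂ) * Complex.I := by
  simp [noisyQubitEffect, sigmaDot, Matrix.add_apply, Matrix.smul_apply, Matrix.one_apply]
  ring

set_option maxHeartbeats 2000000 in
/-- **Necessary and sufficient conditions for joint measurability of noisy qubit POVMs.**
(i) if the `N` noisy qubit POVMs are jointly measurable then `η ≤ (1/N) max_X |m_X|`;
(ii) if `η ≤ 2^N / Σ_X |m_X|` then they are jointly measurable. -/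
theorem noisy_qubit_joint_measurability_conditions
    (N : ℕ) (hN : 1 ≤ N) (η : ℝ) (hη : η ∈ Set.Icc (0 : ℝ) 1)
    (nhat : Fin N → EuclideanSpace ℝ (Fin 3)) (hunit : ∀ k, ‖nhat k‖ = 1) :
    (JointlyMeasurable (fun k => noisyQubitEffect η (nhat k)) →
      η ≤ (1 / (N : ℝ)) * Finset.univ.sup' Finset.univ_nonempty
        (fun X : Fin N → Bool => ‖mvec nhat X‖)) ∧
    (η ≤ 2 ^ N / ∑ X : Fin N → Bool, ‖mvec nhat X‖ →
      JointlyMeasurable (fun k => noisyQubitEffect η (nhat k))) := by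
  constructor
  · -- necessity
    rintro ⟨J, hpsd, hsum, hmarg⟩
    set Mx : ℝ := Finset.univ.sup' Finset.univ_nonempty
      (fun X : Fin N → Bool => ‖mvec nhat X‖) with hMxdef
    have hMge : ∀ X : Fin N → Bool, ‖mvec nhat X‖ ≤ Mx := by
      intro X
      rw [hMxdef]
      exact Finset.le_sup' (fun X : Fin N → Bool => ‖mvec nhat X‖) (Finset.mem_univ X)
    have hMx0 : 0 ≤ Mx := le_trans (norm_nonneg _) (hMge fun _ => true)
    have hNpos : (0 : ℝ) < N := by
      have : (0 : ℕ) < N := hN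
      exact_mod_cast this
    have hunitsq : ∀ k : Fin N, nhat k 0 ^ 2 + nhat k 1 ^ 2 + nhat k 2 ^ 2 = 1 := by
      intro k
      have h := euclid_norm_sq (nhat k)
      rw [hunit k] at h
      rw [← h]; norm_num
    have hsplit : ∀ (k : Fin N) (g : (Fin N → Bool) → ℝ),
        ∑ f : Fin N → Bool, sgn (f k) * g f
          = (∑ f ∈ Finset.univ.filter (fun f : Fin N → Bool => f k = true), g f)
            - ∑ f ∈ Finset.univ.filter (fun f : Fin N → Bool => f k = false), g f := by
      intro k g
      have hT := Finset.sum_filter_add_sum_filter_not (Finset.univ : Finset (Fin N → Bool))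
        (fun f => f k = true) (fun f => sgn (f k) * g f)
      simp only [Bool.not_eq_true] at hT
      rw [← hT]
      have e1 : ∑ f ∈ Finset.univ.filter (fun f : Fin N → Bool => f k = true),
          sgn (f k) * g f
          = ∑ f ∈ Finset.univ.filter (fun f : Fin N → Bool => f k = true), g f := by
        refine Finset.sum_congr rfl fun f hf => ?_
        simp only [Finset.mem_filter] at hf
        rw [hf.2, sgn_true, one_mul]
      have e2 : ∑ f ∈ Finset.univ.filter (fun f : Fin N → Bool => f k = false),
          sgn (f k) * g f
          = -∑ f ∈ Finset.univ.filter (fun f : Fin N → Bool => f k = false), g f := by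
        rw [← Finset.sum_neg_distrib]
        refine Finset.sum_congr rfl fun f hf => ?_
        simp only [Finset.mem_filter] at hf
        rw [hf.2, sgn_false]
        ring
      rw [e1, e2]
      ring
    have h00 : ∀ (k : Fin N) (b : Bool),
        ∑ f ∈ Finset.univ.filter (fun f : Fin N → Bool => f k = b), (J f 0 0).re
          = 1 / 2 + η * sgn b / 2 * nhat k 2 := by
      intro k b
      have h := congrArg (fun B : Matrix (Fin 2) (Fin 2) ℂ => (B 0 0).re) (hmarg k b)
      simpa [Matrix.sum_apply, Complex.re_sum, noisy00] using h
    have h11 : ∀ (k : Fin N) (b : Bool),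
        ∑ f ∈ Finset.univ.filter (fun f : Fin N → Bool => f k = b), (J f 1 1).re
          = 1 / 2 - η * sgn b / 2 * nhat k 2 := by
      intro k b
      have h := congrArg (fun B : Matrix (Fin 2) (Fin 2) ℂ => (B 1 1).re) (hmarg k b)
      simpa [Matrix.sum_apply, Complex.re_sum, noisy11] using h
    have h01re : ∀ (k : Fin N) (b : Bool),
        ∑ f ∈ Finset.univ.filter (fun f : Fin N → Bool => f k = b), (J f 0 1).re
          = η * sgn b / 2 * nhat k 0 := by
      intro k b
      have h := congrArg (fun B : Matrix (Fin 2) (Fin 2) ℂ => (B 0 1).re) (hmarg k b)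
      simpa [Matrix.sum_apply, Complex.re_sum, noisy01] using h
    have h01im : ∀ (k : Fin N) (b : Bool),
        ∑ f ∈ Finset.univ.filter (fun f : Fin N → Bool => f k = b), (J f 0 1).im
          = -(η * sgn b / 2 * nhat k 1) := by
      intro k b
      have h := congrArg (fun B : Matrix (Fin 2) (Fin 2) ℂ => (B 0 1).im) (hmarg k b)
      simpa [Matrix.sum_apply, Complex.im_sum, noisy01] using h
    have hsa : ∑ f : Fin N → Bool, (J f 0 0).re = 1 := by
      have h := congrArg (fun B : Matrix (Fin 2) (Fin 2) ℂ => (B 0 0).re) hsum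
      simpa [Matrix.sum_apply, Complex.re_sum, Matrix.one_apply] using h
    have hsd : ∑ f : Fin N → Bool, (J f 1 1).re = 1 := by
      have h := congrArg (fun B : Matrix (Fin 2) (Fin 2) ℂ => (B 1 1).re) hsum
      simpa [Matrix.sum_apply, Complex.re_sum, Matrix.one_apply] using h
    -- signed sums over the whole cube
    have hWa : ∀ k : Fin N, ∑ f : Fin N → Bool, sgn (f k) * (J f 0 0).re
        = η * nhat k 2 := by
      intro k
      rw [hsplit k, h00 k true, h00 k false]
      simp only [sgn_true, sgn_false]
      ring
    have hWd : ∀ k : Fin N, ∑ f : Fin N → Bool, sgn (f k) * (J f 1 1).re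
        = -(η * nhat k 2) := by
      intro k
      rw [hsplit k, h11 k true, h11 k false]
      simp only [sgn_true, sgn_false]
      ring
    have hWre : ∀ k : Fin N, ∑ f : Fin N → Bool, sgn (f k) * (J f 0 1).re
        = η * nhat k 0 := by
      intro k
      rw [hsplit k, h01re k true, h01re k false]
      simp only [sgn_true, sgn_false]
      ring
    have hWim : ∀ k : Fin N, ∑ f : Fin N → Bool, sgn (f k) * (J f 0 1).im
        = -(η * nhat k 1) := by
      intro k
      rw [hsplit k, h01im k true, h01im k false]
      simp only [sgn_true, sgn_false]
      ring
    set w0 : (Fin N → Bool) → ℝ := fun f => 2 * (J f 0 1).re with hw0def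
    set w1 : (Fin N → Bool) → ℝ := fun f => -2 * (J f 0 1).im with hw1def
    set w2 : (Fin N → Bool) → ℝ := fun f => (J f 0 0).re - (J f 1 1).re with hw2def
    set cc : (Fin N → Bool) → ℝ := fun f => (J f 0 0).re + (J f 1 1).re with hccdef
    have hW0 : ∀ k : Fin N, ∑ f : Fin N → Bool, sgn (f k) * w0 f = 2 * (η * nhat k 0) := by
      intro k
      rw [← hWre k, Finset.mul_sum]
      refine Finset.sum_congr rfl fun f _ => ?_
      simp only [hw0def]
      ring
    have hW1 : ∀ k : Fin N, ∑ f : Fin N → Bool, sgn (f k) * w1 f = 2 * (η * nhat k 1) := by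
      intro k
      have h := hWim k
      calc ∑ f : Fin N → Bool, sgn (f k) * w1 f
          = -2 * ∑ f : Fin N → Bool, sgn (f k) * (J f 0 1).im := by
            rw [Finset.mul_sum]
            refine Finset.sum_congr rfl fun f _ => ?_
            simp only [hw1def]
            ring
        _ = 2 * (η * nhat k 1) := by rw [h]; ring
    have hW2 : ∀ k : Fin N, ∑ f : Fin N → Bool, sgn (f k) * w2 f = 2 * (η * nhat k 2) := by
      intro k
      have hone : ∀ f : Fin N → Bool, sgn (f k) * w2 f
          = sgn (f k) * (J f 0 0).re - sgn (f k) * (J f 1 1).re := by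
        intro f
        simp only [hw2def]
        ring
      rw [Finset.sum_congr rfl fun f _ => hone f, Finset.sum_sub_distrib, hWa k, hWd k]
      ring
    have hccsum : ∑ f : Fin N → Bool, cc f = 2 := by
      have hone : ∀ f : Fin N → Bool, cc f = (J f 0 0).re + (J f 1 1).re := fun f => by
        simp only [hccdef]
      rw [Finset.sum_congr rfl fun f _ => hone f, Finset.sum_add_distrib, hsa, hsd]
      norm_num
    have hkey : ∑ f : Fin N → Bool,
        (mvec nhat f 0 * w0 f + mvec nhat f 1 * w1 f + mvec nhat f 2 * w2 f)
        = 2 * η * N := by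
      calc ∑ f : Fin N → Bool,
          (mvec nhat f 0 * w0 f + mvec nhat f 1 * w1 f + mvec nhat f 2 * w2 f)
          = ∑ f : Fin N → Bool, ∑ k : Fin N, sgn (f k)
              * (nhat k 0 * w0 f + nhat k 1 * w1 f + nhat k 2 * w2 f) := by
            refine Finset.sum_congr rfl fun f _ => ?_
            rw [mvec_apply, mvec_apply, mvec_apply, Finset.sum_mul, Finset.sum_mul,
              Finset.sum_mul, ← Finset.sum_add_distrib, ← Finset.sum_add_distrib]
            refine Finset.sum_congr rfl fun k _ => ?_
            ring
        _ = ∑ k : Fin N, ∑ f : Fin N → Bool, sgn (f k)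
              * (nhat k 0 * w0 f + nhat k 1 * w1 f + nhat k 2 * w2 f) := Finset.sum_comm
        _ = ∑ k : Fin N, (nhat k 0 * (2 * (η * nhat k 0)) + nhat k 1 * (2 * (η * nhat k 1))
              + nhat k 2 * (2 * (η * nhat k 2))) := by
            refine Finset.sum_congr rfl fun k _ => ?_
            have hone : ∀ f : Fin N → Bool, sgn (f k)
                * (nhat k 0 * w0 f + nhat k 1 * w1 f + nhat k 2 * w2 f)
                = nhat k 0 * (sgn (f k) * w0 f) + nhat k 1 * (sgn (f k) * w1 f)
                  + nhat k 2 * (sgn (f k) * w2 f) := fun f => by ring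
            rw [Finset.sum_congr rfl fun f _ => hone f, Finset.sum_add_distrib,
              Finset.sum_add_distrib, ← Finset.mul_sum, ← Finset.mul_sum, ← Finset.mul_sum,
              hW0 k, hW1 k, hW2 k]
        _ = ∑ k : Fin N, 2 * η := by
            refine Finset.sum_congr rfl fun k _ => ?_
            have h := hunitsq k
            linear_combination 2 * η * h
        _ = 2 * η * N := by
            rw [Finset.sum_const, Finset.card_univ, Fintype.card_fin, nsmul_eq_mul]
            ring
    have hub : ∀ f : Fin N → Bool,
        mvec nhat f 0 * w0 f + mvec nhat f 1 * w1 f + mvec nhat f 2 * w2 f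
          ≤ Mx * cc f := by
      intro f
      obtain ⟨ha0, hd0, -, -, -, hbad⟩ := psd2' (hpsd f)
      rw [Complex.normSq_apply] at hbad
      have hcc0 : 0 ≤ cc f := by simp only [hccdef]; linarith
      have hwsq : w0 f ^ 2 + w1 f ^ 2 + w2 f ^ 2 ≤ cc f ^ 2 := by
        simp only [hw0def, hw1def, hw2def, hccdef]
        nlinarith [hbad]
      have hmsq := euclid_norm_sq (mvec nhat f)
      have hmle : ‖mvec nhat f‖ ≤ Mx := hMge f
      have hCS : (mvec nhat f 0 * w0 f + mvec nhat f 1 * w1 f + mvec nhat f 2 * w2 f) ^ 2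
          ≤ (mvec nhat f 0 ^ 2 + mvec nhat f 1 ^ 2 + mvec nhat f 2 ^ 2)
            * (w0 f ^ 2 + w1 f ^ 2 + w2 f ^ 2) := by
        nlinarith [sq_nonneg (mvec nhat f 0 * w1 f - mvec nhat f 1 * w0 f),
          sq_nonneg (mvec nhat f 0 * w2 f - mvec nhat f 2 * w0 f),
          sq_nonneg (mvec nhat f 1 * w2 f - mvec nhat f 2 * w1 f)]
      have h1 : (mvec nhat f 0 * w0 f + mvec nhat f 1 * w1 f + mvec nhat f 2 * w2 f) ^ 2
          ≤ (‖mvec nhat f‖ * cc f) ^ 2 := by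
        have h2 : (mvec nhat f 0 ^ 2 + mvec nhat f 1 ^ 2 + mvec nhat f 2 ^ 2)
            * (w0 f ^ 2 + w1 f ^ 2 + w2 f ^ 2)
            ≤ ‖mvec nhat f‖ ^ 2 * cc f ^ 2 := by
          rw [← hmsq] at *
          nlinarith [sq_nonneg (‖mvec nhat f‖), hwsq]
        calc _ ≤ _ := hCS
          _ ≤ ‖mvec nhat f‖ ^ 2 * cc f ^ 2 := h2
          _ = (‖mvec nhat f‖ * cc f) ^ 2 := by ring
      have h3 : 0 ≤ ‖mvec nhat f‖ * cc f := mul_nonneg (norm_nonneg _) hcc0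
      have h4 : mvec nhat f 0 * w0 f + mvec nhat f 1 * w1 f + mvec nhat f 2 * w2 f
          ≤ ‖mvec nhat f‖ * cc f := by nlinarith [h1, h3]
      have h5 : ‖mvec nhat f‖ * cc f ≤ Mx * cc f := mul_le_mul_of_nonneg_right hmle hcc0
      linarith
    have hfin : 2 * η * N ≤ Mx * 2 := by
      rw [← hkey]
      calc ∑ f : Fin N → Bool,
          (mvec nhat f 0 * w0 f + mvec nhat f 1 * w1 f + mvec nhat f 2 * w2 f)
          ≤ ∑ f : Fin N → Bool, Mx * cc f := Finset.sum_le_sum fun f _ => hub f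
        _ = Mx * ∑ f : Fin N → Bool, cc f := by rw [Finset.mul_sum]
        _ = Mx * 2 := by rw [hccsum]
    rw [one_div_mul_eq_div, le_div_iff₀ hNpos]
    nlinarith [hfin]
  · -- sufficiency
    intro hcond
    classical
    set S : ℝ := ∑ X : Fin N → Bool, ‖mvec nhat X‖ with hSdef
    set Q : ℝ := (2 : ℝ) ^ N with hQdef
    clear_value S Q
    have hQpos : (0 : ℝ) < Q := by rw [hQdef]; positivity
    have hS0 : 0 ≤ S := by
      rw [hSdef]
      exact Finset.sum_nonneg fun X _ => norm_nonneg _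
    set t : ℝ := η * S / Q with htdef
    set c₁ : ℝ := (1 - t) / Q with hc₁def
    set β : ℝ := η / Q with hβdef
    clear_value t c₁ β
    have hβ0 : 0 ≤ β := by rw [hβdef]; exact div_nonneg hη.1 hQpos.le
    have ht0 : 0 ≤ t := by
      rw [htdef]; exact div_nonneg (mul_nonneg hη.1 hS0) hQpos.le
    have ht1 : t ≤ 1 := by
      rcases hS0.eq_or_lt with hS' | hS'
      · rw [htdef, ← hS', mul_zero, zero_div]; norm_num
      · rw [htdef, div_le_one hQpos]
        have h1 : η * S ≤ (Q / S) * S := mul_le_mul_of_nonneg_right hcond hS0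
        have h2 : (Q / S) * S = Q := by field_simp
        linarith
    have hc₁0 : 0 ≤ c₁ := by rw [hc₁def]; exact div_nonneg (by linarith) hQpos.le
    have hPr : (2 : ℝ) ^ (N - 1) = Q / 2 := by
      rw [hQdef]
      have hNe : N = (N - 1) + 1 := (Nat.succ_pred_eq_of_pos hN).symm
      rw [hNe, pow_succ, Nat.add_sub_cancel]
      ring
    have hPc : ((2 ^ (N - 1) : ℕ) : ℝ) = Q / 2 := by push_cast; exact hPr
    have hcardU : ((Finset.univ : Finset (Fin N → Bool)).card : ℝ) = Q := by
      rw [Finset.card_univ]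
      have : Fintype.card (Fin N → Bool) = 2 ^ N := by simp
      rw [this, hQdef]; push_cast; ring
    have hU : ∀ j : Fin 3, ∑ f : Fin N → Bool, mvec nhat f j = 0 := by
      intro j
      have hT := Finset.sum_filter_add_sum_filter_not (Finset.univ : Finset (Fin N → Bool))
        (fun f => f ⟨0, hN⟩ = true) (fun f => mvec nhat f j)
      simp only [Bool.not_eq_true] at hT
      rw [sum_mvec_comp hN nhat ⟨0, hN⟩ true j, sum_mvec_comp hN nhat ⟨0, hN⟩ false j] at hT
      simp only [sgn_true, sgn_false] at hT
      linarith
    set a : (Fin N → Bool) → ℝ :=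
      fun f => c₁ + β * (‖mvec nhat f‖ + mvec nhat f 2) with hadef
    set dd : (Fin N → Bool) → ℝ :=
      fun f => c₁ + β * (‖mvec nhat f‖ - mvec nhat f 2) with hddef
    set bC : (Fin N → Bool) → ℂ :=
      fun f => ((β * mvec nhat f 0 : ℝ) : ℂ) - ((β * mvec nhat f 1 : ℝ) : ℂ) * Complex.I
      with hbCdef
    clear_value a dd bC
    refine ⟨fun f => !![(a f : ℂ), bC f; (starRingEnd ℂ) (bC f), (dd f : ℂ)],
      fun f => ?_, ?_, ?_⟩
    · -- PSD
      apply psd2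
      · have h2le := comp_sq_le (mvec nhat f) 2
        have hn0 := norm_nonneg (mvec nhat f)
        have hpos : 0 ≤ ‖mvec nhat f‖ + mvec nhat f 2 := by nlinarith
        simp only [hadef]
        exact add_nonneg hc₁0 (mul_nonneg hβ0 hpos)
      · have h2le := comp_sq_le (mvec nhat f) 2
        have hn0 := norm_nonneg (mvec nhat f)
        have hpos : 0 ≤ ‖mvec nhat f‖ - mvec nhat f 2 := by nlinarith
        simp only [hddef]
        exact add_nonneg hc₁0 (mul_nonneg hβ0 hpos)
      · have hbc : Complex.normSq (bC f)
            = β ^ 2 * (mvec nhat f 0 ^ 2 + mvec nhat f 1 ^ 2) := by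
          simp only [hbCdef]
          simp [Complex.normSq_apply]
          ring
        rw [hbc]
        simp only [hadef, hddef]
        have hms := euclid_norm_sq (mvec nhat f)
        nlinarith [mul_nonneg (mul_nonneg hc₁0 hβ0) (norm_nonneg (mvec nhat f)),
          sq_nonneg c₁]
    · -- sums to identity
      have hS00 : ∑ f : Fin N → Bool, ((a f : ℝ) : ℂ) = 1 := by
        rw [← Complex.ofReal_sum]
        have hra : ∑ f : Fin N → Bool, a f = 1 := by
          simp only [hadef]
          have : ∀ f : Fin N → Bool, c₁ + β * (‖mvec nhat f‖ + mvec nhat f 2)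
              = c₁ + (β * ‖mvec nhat f‖ + β * mvec nhat f 2) := fun f => by ring
          rw [Finset.sum_congr rfl fun f _ => this f, Finset.sum_add_distrib,
            Finset.sum_add_distrib, Finset.sum_const, ← Finset.mul_sum, ← Finset.mul_sum,
            hU 2, ← hSdef, mul_zero, add_zero, nsmul_eq_mul, hcardU]
          rw [hc₁def, hβdef, htdef]
          field_simp
          ring
        rw [hra]; norm_num
      have hS11 : ∑ f : Fin N → Bool, ((dd f : ℝ) : ℂ) = 1 := by
        rw [← Complex.ofReal_sum]
        have hra : ∑ f : Fin N → Bool, dd f = 1 := by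
          simp only [hddef]
          have : ∀ f : Fin N → Bool, c₁ + β * (‖mvec nhat f‖ - mvec nhat f 2)
              = c₁ + (β * ‖mvec nhat f‖ - β * mvec nhat f 2) := fun f => by ring
          rw [Finset.sum_congr rfl fun f _ => this f, Finset.sum_add_distrib,
            Finset.sum_sub_distrib, Finset.sum_const, ← Finset.mul_sum, ← Finset.mul_sum,
            hU 2, ← hSdef, mul_zero, sub_zero, nsmul_eq_mul, hcardU]
          rw [hc₁def, hβdef, htdef]
          field_simp
          ring
        rw [hra]; norm_num
      have hS01 : ∑ f : Fin N → Bool, bC f = 0 := by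
        simp only [hbCdef]
        rw [Finset.sum_sub_distrib, ← Finset.sum_mul, ← Complex.ofReal_sum,
          ← Complex.ofReal_sum]
        have e0 : ∑ f : Fin N → Bool, β * mvec nhat f 0 = 0 := by
          rw [← Finset.mul_sum, hU 0, mul_zero]
        have e1 : ∑ f : Fin N → Bool, β * mvec nhat f 1 = 0 := by
          rw [← Finset.mul_sum, hU 1, mul_zero]
        rw [e0, e1]
        simp
      have hS10 : ∑ f : Fin N → Bool, (starRingEnd ℂ) (bC f) = 0 := by
        rw [← map_sum, hS01, map_zero]
      ext i j
      rw [Matrix.sum_apply]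
      fin_cases i <;> fin_cases j
      · simpa using hS00
      · simpa using hS01
      · simpa using hS10
      · simpa using hS11
    · -- marginals
      intro k b
      have hcardF : ((Finset.univ.filter (fun f : Fin N → Bool => f k = b)).card : ℝ)
          = Q / 2 := by rw [card_filter_bool hN k b]; exact hPc
      have hmc : ∀ j : Fin 3,
          ∑ f ∈ Finset.univ.filter (fun f : Fin N → Bool => f k = b), mvec nhat f j
            = sgn b * (Q / 2) * nhat k j := by
        intro j
        rw [sum_mvec_comp hN nhat k b j, hPr]
      have hnorm : ∑ f ∈ Finset.univ.filter (fun f : Fin N → Bool => f k = b), ‖mvec nhat f‖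
          = S / 2 := by rw [sum_norm_filter hN nhat k b, hSdef]
      have hM00 : ∑ f ∈ Finset.univ.filter (fun f : Fin N → Bool => f k = b), ((a f : ℝ) : ℂ)
          = ((1 / 2 + η * sgn b / 2 * nhat k 2 : ℝ) : ℂ) := by
        rw [← Complex.ofReal_sum]
        congr 1
        simp only [hadef]
        have : ∀ f : Fin N → Bool, c₁ + β * (‖mvec nhat f‖ + mvec nhat f 2)
            = c₁ + (β * ‖mvec nhat f‖ + β * mvec nhat f 2) := fun f => by ring
        rw [Finset.sum_congr rfl fun f _ => this f, Finset.sum_add_distrib,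
          Finset.sum_add_distrib, Finset.sum_const, ← Finset.mul_sum, ← Finset.mul_sum,
          hnorm, hmc 2, nsmul_eq_mul, hcardF]
        rw [hc₁def, hβdef, htdef]
        field_simp
        ring
      have hM11 : ∑ f ∈ Finset.univ.filter (fun f : Fin N → Bool => f k = b), ((dd f : ℝ) : ℂ)
          = ((1 / 2 - η * sgn b / 2 * nhat k 2 : ℝ) : ℂ) := by
        rw [← Complex.ofReal_sum]
        congr 1
        simp only [hddef]
        have : ∀ f : Fin N → Bool, c₁ + β * (‖mvec nhat f‖ - mvec nhat f 2)
            = c₁ + (β * ‖mvec nhat f‖ - β * mvec nhat f 2) := fun f => by ring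
        rw [Finset.sum_congr rfl fun f _ => this f, Finset.sum_add_distrib,
          Finset.sum_sub_distrib, Finset.sum_const, ← Finset.mul_sum, ← Finset.mul_sum,
          hnorm, hmc 2, nsmul_eq_mul, hcardF]
        rw [hc₁def, hβdef, htdef]
        field_simp
        ring
      have hre0 : ∑ f ∈ Finset.univ.filter (fun f : Fin N → Bool => f k = b),
          β * mvec nhat f 0 = η * sgn b / 2 * nhat k 0 := by
        rw [← Finset.mul_sum, hmc 0, hβdef, div_mul_eq_mul_div,
          div_eq_iff hQpos.ne']
        ring
      have hre1 : ∑ f ∈ Finset.univ.filter (fun f : Fin N → Bool => f k = b),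
          β * mvec nhat f 1 = η * sgn b / 2 * nhat k 1 := by
        rw [← Finset.mul_sum, hmc 1, hβdef, div_mul_eq_mul_div,
          div_eq_iff hQpos.ne']
        ring
      have hM01 : ∑ f ∈ Finset.univ.filter (fun f : Fin N → Bool => f k = b), bC f
          = ((η * sgn b / 2 * nhat k 0 : ℝ) : ℂ)
            - ((η * sgn b / 2 * nhat k 1 : ℝ) : ℂ) * Complex.I := by
        simp only [hbCdef]
        rw [Finset.sum_sub_distrib, ← Finset.sum_mul, ← Complex.ofReal_sum,
          ← Complex.ofReal_sum, hre0, hre1]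
      have hM10 : ∑ f ∈ Finset.univ.filter (fun f : Fin N → Bool => f k = b),
          (starRingEnd ℂ) (bC f)
          = ((η * sgn b / 2 * nhat k 0 : ℝ) : ℂ)
            + ((η * sgn b / 2 * nhat k 1 : ℝ) : ℂ) * Complex.I := by
        rw [← map_sum, hM01, map_sub, map_mul, Complex.conj_ofReal, Complex.conj_ofReal,
          Complex.conj_I]
        ring
      ext i j
      rw [Matrix.sum_apply]
      fin_cases i <;> fin_cases j
      · simpa [noisy00] using hM00
      · simpa [noisy01] using hM01
      · simpa [noisy10] using hM10
      · simpa [noisy11] using hM11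
end

section
/- For any three unit vectors n̂_1, n̂_2, n̂_3 in ℝ³, √(1 + n̂_1·n̂_2) + √(1 + n̂_2·n̂_3) + √(1 + n̂_1·n̂_3) ≥ √2 (equivalently, writing n̂_i·n̂_j = cos θ_{ij}, one has |cos(θ_{12}/2)| + |cos(θ_{23}/2)| + |cos(θ_{13}/2)| ≥ 1). Consequently the necessary condition Σ_{(ij)} √(1 + n̂_i·n̂_j) < √2 for a state-independent quantum violation of the LSW inequality by noisy qubit POVMs can never be satisfied. -/
/-!
For unit vectors `√(1 + ⟪u, v⟫) = ‖u + v‖ / √2`, so the claim is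
`‖n₁ + n₂‖ + ‖n₂ + n₃‖ + ‖n₁ + n₃‖ ≥ 2`. This is the triangle inequality
applied to `2 n₁ = (n₁ + n₂) - (n₂ + n₃) + (n₁ + n₃)`.
-/

open scoped RealInnerProductSpace

lemma two_mul_norm_le_norm_add_add_norm_add_add_norm_add {E : Type*} [SeminormedAddCommGroup E]
    [NormedSpace ℝ E] (a b c : E) : 2 * ‖a‖ ≤ ‖a + b‖ + ‖b + c‖ + ‖a + c‖ :=
  calc 2 * ‖a‖ = ‖(2 : ℝ) • a‖ := by rw [norm_smul, Real.norm_two]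
    _ = ‖(a + b) - (b + c) + (a + c)‖ := by rw [two_smul]; abel_nf
    _ ≤ ‖(a + b) - (b + c)‖ + ‖a + c‖ := norm_add_le _ _
    _ ≤ ‖a + b‖ + ‖b + c‖ + ‖a + c‖ := by gcongr; exact norm_sub_le _ _

lemma sqrt_one_add_inner_eq_norm_add_div_sqrt_two {E : Type*} [NormedAddCommGroup E]
    [InnerProductSpace ℝ E] {u v : E} (hu : ‖u‖ = 1) (hv : ‖v‖ = 1) :
    √(1 + ⟪u, v⟫) = ‖u + v‖ / √2 := by
  have h : 1 + ⟪u, v⟫ = ‖u + v‖ ^ 2 / 2 := by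
    rw [norm_add_sq_real, hu, hv]; ring
  rw [h, Real.sqrt_div' _ zero_le_two, Real.sqrt_sq (norm_nonneg _)]

/-- **No state-independent violation of the LSW inequality.** For any three unit vectors
`n̂₁, n̂₂, n̂₃` in `ℝ³`, one has `√(1 + n̂₁·n̂₂) + √(1 + n̂₂·n̂₃) + √(1 + n̂₁·n̂₃) ≥ √2`, so the
necessary condition `Σ √(1 + n̂_i·n̂_j) < √2` for a state-independent quantum violation of the
LSW inequality can never be satisfied. -/
theorem sum_sqrt_one_add_inner_ge_sqrt_two
    (n₁ n₂ n₃ : EuclideanSpace ℝ (Fin 3))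
    (h₁ : ‖n₁‖ = 1) (h₂ : ‖n₂‖ = 1) (h₃ : ‖n₃‖ = 1) :
    Real.sqrt 2 ≤
      Real.sqrt (1 + ⟪n₁, n₂⟫) + Real.sqrt (1 + ⟪n₂, n₃⟫) + Real.sqrt (1 + ⟪n₁, n₃⟫) := by
  rw [sqrt_one_add_inner_eq_norm_add_div_sqrt_two h₁ h₂,
    sqrt_one_add_inner_eq_norm_add_div_sqrt_two h₂ h₃,
    sqrt_one_add_inner_eq_norm_add_div_sqrt_two h₁ h₃, ← add_div, ← add_div,
    le_div_iff₀ (by positivity), Real.mul_self_sqrt zero_le_two]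
  have := two_mul_norm_le_norm_add_add_norm_add_add_norm_add n₁ n₂ n₃
  rwa [h₁, mul_one] at this
end

section
/- There exist η ∈ (2/3, √3 − 1), unit vectors n̂_1, n̂_2, n̂_3 ∈ ℝ³, a 2×2 density matrix ρ (positive semidefinite with trace 1), and for each pair (ij) ∈ {(12),(23),(13)} a four-outcome POVM G^{ij} = {G^{ij}_{X_iX_j}}_{X_i,X_j∈{+1,−1}} on ℂ² whose marginals are the noisy qubit POVMs M_i and M_j (i.e. Σ_{X_j} G^{ij}_{X_iX_j} = E^i_{X_i} and Σ_{X_i} G^{ij}_{X_iX_j} = E^j_{X_j}, where E^k_{X_k} = ½ I + ½ η X_k σ·n̂_k), such that: (1) the triple M_1, M_2, M_3 admits no triplewise joint POVM; and (2) the average anticorrelation violates the LSW bound: (1/3) Σ_{(ij)} Tr(ρ (G^{ij}_{+−} + G^{ij}_{−+})) > 1 − η/3. In particular this can be achieved with trine axes n̂_i·n̂_j = −1/2 coplanar in the z–x plane of the Bloch sphere. -/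
open scoped BigOperators ComplexOrder RealInnerProductSpace Matrix

/-!
The pairwise joint POVMs are `¼ ((1 + a b c) I + (η a n̂ᵢ + η b n̂ⱼ + a b m)·σ)`; for trine axes
and `m` orthogonal to their plane, positivity only asks `η² + ‖m‖² ≤ (1 + c)²` and
`3η² + ‖m‖² ≤ (1 − c)²`, and a state with Bloch vector `r` sees the anticorrelation
`(1 − c − ⟪r, m⟫) / 2`, which beats `1 − η/3` for `r` antiparallel to `m`.
A triplewise joint POVM `T` is excluded by evaluating `∑_f Tr(T_f σ·c_f)`, `c_f = ∑ᵢ fᵢ n̂ᵢ`: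
the marginals make it `2 · 3 η`, while `Tr(T σ·c) ≤ ‖c‖ Tr T` and `‖c_f‖ ≤ 2` for trine axes
bound it by `2 · 2`, so `η ≤ 2/3`.
-/

open scoped Matrix

local notation "E³" => EuclideanSpace ℝ (Fin 3)

lemma sigmaDot_add (v w : E³) : sigmaDot (v + w) = sigmaDot v + sigmaDot w := by
  simp only [sigmaDot, PiLp.add_apply, Complex.ofReal_add]
  module

lemma sigmaDot_smul (r : ℝ) (v : E³) : sigmaDot (r • v) = (r : ℂ) • sigmaDot v := by
  simp only [sigmaDot, PiLp.smul_apply, smul_eq_mul, Complex.ofReal_mul]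
  module

lemma sigmaDot_neg (v : E³) : sigmaDot (-v) = -sigmaDot v := by
  simpa using sigmaDot_smul (-1) v

lemma sigmaDot_sum {ι : Type*} (s : Finset ι) (v : ι → E³) :
    sigmaDot (∑ i ∈ s, v i) = ∑ i ∈ s, sigmaDot (v i) :=
  map_sum (AddMonoidHom.mk' sigmaDot sigmaDot_add) v s

lemma sigmaDot_conjTranspose (v : E³) : (sigmaDot v)ᴴ = sigmaDot v := by
  ext i j
  fin_cases i <;> fin_cases j <;> simp [sigmaDot, Matrix.conjTranspose_apply]

lemma trace_sigmaDot (v : E³) : (sigmaDot v).trace = 0 := by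
  simp [sigmaDot, Matrix.trace, Fin.sum_univ_two]

lemma trace_sigmaDot_mul_sigmaDot (v w : E³) :
    (sigmaDot v * sigmaDot w).trace = 2 * (⟪v, w⟫ : ℝ) := by
  simp [sigmaDot, Matrix.trace, Fin.sum_univ_two, PiLp.inner_apply,
    Fin.sum_univ_three]
  ring_nf
  simp [Complex.I_sq]

lemma sigmaDot_mul_self (v : E³) : sigmaDot v * sigmaDot v = ((‖v‖ ^ 2 : ℝ) : ℂ) • 1 := by
  rw [EuclideanSpace.real_norm_sq_eq]
  ext i j
  fin_cases i <;> fin_cases j <;>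
    simp [sigmaDot, Matrix.mul_apply, Fin.sum_univ_two, Fin.sum_univ_three] <;> ring_nf <;>
    simp [Complex.I_sq]

noncomputable def bloch (a : ℝ) (v : E³) : Matrix (Fin 2) (Fin 2) ℂ := (a : ℂ) • 1 + sigmaDot v

lemma bloch_add (a b : ℝ) (v w : E³) : bloch a v + bloch b w = bloch (a + b) (v + w) := by
  simp only [bloch, sigmaDot_add, Complex.ofReal_add, add_smul]
  abel

lemma trace_bloch (a : ℝ) (v : E³) : (bloch a v).trace = 2 * a := by
  simp [bloch, trace_sigmaDot]
  ring

lemma trace_bloch_mul_bloch (a b : ℝ) (v w : E³) :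
    (bloch a v * bloch b w).trace = 2 * ((a * b + ⟪v, w⟫ : ℝ) : ℂ) := by
  simp only [bloch, add_mul, mul_add, Matrix.smul_mul, Matrix.mul_smul, Matrix.one_mul,
    Matrix.mul_one, Matrix.trace_add, Matrix.trace_smul, trace_sigmaDot,
    trace_sigmaDot_mul_sigmaDot, Matrix.trace_one, Fintype.card_fin, smul_eq_mul]
  push_cast
  ring

lemma bloch_norm_mul_self (v : E³) :
    bloch ‖v‖ v * bloch ‖v‖ v = ((2 * ‖v‖ : ℝ) : ℂ) • bloch ‖v‖ v := by
  simp only [bloch, add_mul, mul_add, Matrix.smul_mul, Matrix.mul_smul, Matrix.one_mul,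
    Matrix.mul_one, sigmaDot_mul_self, smul_add, smul_smul]
  push_cast
  module

lemma bloch_norm_posSemidef (v : E³) : (bloch ‖v‖ v).PosSemidef := by
  rcases eq_or_ne v 0 with rfl | hv
  · simpa [bloch, sigmaDot] using Matrix.PosSemidef.zero
  have hB : (bloch ‖v‖ v)ᴴ = bloch ‖v‖ v := by
    simp [bloch, Matrix.conjTranspose_add, Matrix.conjTranspose_smul, sigmaDot_conjTranspose]
  have hsq : bloch ‖v‖ v = (((2 * ‖v‖)⁻¹ : ℝ) : ℂ) • ((bloch ‖v‖ v)ᴴ * bloch ‖v‖ v) := by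
    rw [hB, bloch_norm_mul_self, smul_smul, ← Complex.ofReal_mul,
      inv_mul_cancel₀ (by positivity), Complex.ofReal_one, one_smul]
  rw [hsq]
  exact (Matrix.posSemidef_conjTranspose_mul_self _).smul
    (Complex.zero_le_real.mpr (by positivity))

lemma bloch_posSemidef {a : ℝ} {v : E³} (h : ‖v‖ ≤ a) : (bloch a v).PosSemidef := by
  have : bloch a v = ((a - ‖v‖ : ℝ) : ℂ) • 1 + bloch ‖v‖ v := by
    simp only [bloch, Complex.ofReal_sub, sub_smul]
    abel
  rw [this]
  exact (Matrix.PosSemidef.one.smul (Complex.zero_le_real.mpr (sub_nonneg.mpr h))).add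
    (bloch_norm_posSemidef v)

open scoped MatrixOrder in
lemma Matrix.PosSemidef.trace_mul_nonneg {n : Type*} [Fintype n] [DecidableEq n]
    {A B : Matrix n n ℂ} (hA : A.PosSemidef) (hB : B.PosSemidef) : 0 ≤ (A * B).trace := by
  obtain ⟨C, rfl⟩ : ∃ C : Matrix n n ℂ, B = Cᴴ * C :=
    CStarAlgebra.nonneg_iff_eq_star_mul_self.mp hB.nonneg
  rw [← Matrix.mul_assoc, Matrix.trace_mul_comm, ← Matrix.mul_assoc]
  exact (hA.mul_mul_conjTranspose_same C).trace_nonneg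

lemma re_trace_mul_sigmaDot_le {T : Matrix (Fin 2) (Fin 2) ℂ} (hT : T.PosSemidef) (w : E³) :
    (T * sigmaDot w).trace.re ≤ ‖w‖ * T.trace.re := by
  have h := (Complex.nonneg_iff.mp
    (hT.trace_mul_nonneg (bloch_posSemidef (norm_neg w).le))).1
  simp only [bloch, sigmaDot_neg, Matrix.mul_add, Matrix.mul_smul, Matrix.mul_one,
    Matrix.mul_neg, Matrix.trace_add, Matrix.trace_neg, Matrix.trace_smul, smul_eq_mul,
    Complex.add_re, Complex.neg_re, Complex.re_ofReal_mul] at h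
  linarith

lemma noisyQubitEffect_eq_bloch (η : ℝ) (v : E³) (b : Bool) :
    noisyQubitEffect η v b = bloch (1 / 2) ((η * sgn b / 2) • v) := by
  simp [noisyQubitEffect, bloch, sigmaDot_smul]

lemma sum_noisyQubitEffect (η : ℝ) (v : E³) : ∑ b, noisyQubitEffect η v b = 1 := by
  simp only [noisyQubitEffect, Fintype.sum_bool, sgn]
  push_cast
  module

lemma sum_sgn_smul_noisyQubitEffect (η : ℝ) (v : E³) :
    ∑ b, (sgn b : ℂ) • noisyQubitEffect η v b = (η : ℂ) • sigmaDot v := by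
  simp only [noisyQubitEffect, Fintype.sum_bool, sgn]
  push_cast
  module

lemma card_mul_le_of_jointPOVM {ι : Type*} [Fintype ι] [DecidableEq ι] {η K : ℝ}
    {n : ι → E³} (hn : ∀ i, ‖n i‖ = 1) (hK : ∀ f : ι → Bool, ‖∑ i, sgn (f i) • n i‖ ≤ K)
    {T : (ι → Bool) → Matrix (Fin 2) (Fin 2) ℂ} (hT : ∀ f, (T f).PosSemidef)
    (hsum : ∑ f, T f = 1)
    (hmarg : ∀ i a, ∑ f ∈ Finset.univ.filter (fun f => f i = a), T f = noisyQubitEffect η (n i) a) :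
    Fintype.card ι * η ≤ K := by
  have signed (i : ι) : ∑ f, (sgn (f i) : ℂ) • T f = (η : ℂ) • sigmaDot (n i) := by
    rw [← Finset.sum_fiberwise Finset.univ (fun f => f i), ← sum_sgn_smul_noisyQubitEffect]
    refine Finset.sum_congr rfl fun a _ => ?_
    rw [← hmarg i a, Finset.smul_sum]
    exact Finset.sum_congr rfl fun f hf => by rw [(Finset.mem_filter.mp hf).2]
  have correlation : ∑ f, (T f * sigmaDot (∑ i, sgn (f i) • n i)).trace
      = (2 * Fintype.card ι * η : ℝ) := by
    calc ∑ f, (T f * sigmaDot (∑ i, sgn (f i) • n i)).trace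
        = ∑ i, ((∑ f, (sgn (f i) : ℂ) • T f) * sigmaDot (n i)).trace := by
          simp only [sigmaDot_sum, sigmaDot_smul, Matrix.mul_sum, Matrix.sum_mul,
            Matrix.trace_sum, Matrix.mul_smul, Matrix.smul_mul]
          exact Finset.sum_comm
      _ = ∑ _i : ι, 2 * (η : ℂ) := by
          simp only [signed, Matrix.smul_mul, Matrix.trace_smul, trace_sigmaDot_mul_sigmaDot,
            real_inner_self_eq_norm_sq, hn, smul_eq_mul]
          push_cast
          ring_nf
      _ = (2 * Fintype.card ι * η : ℝ) := by simp; ring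
  have bound : ∑ f, (T f * sigmaDot (∑ i, sgn (f i) • n i)).trace.re ≤ K * 2 := by
    calc ∑ f, (T f * sigmaDot (∑ i, sgn (f i) • n i)).trace.re
        ≤ ∑ f, K * (T f).trace.re := Finset.sum_le_sum fun f _ =>
          (re_trace_mul_sigmaDot_le (hT f) _).trans
            (mul_le_mul_of_nonneg_right (hK f) (Complex.nonneg_iff.mp (hT f).trace_nonneg).1)
      _ = K * 2 := by
          rw [← Finset.mul_sum, ← Complex.re_sum, ← Matrix.trace_sum, hsum]
          simp
  have := congrArg Complex.re correlation
  rw [Complex.re_sum, Complex.ofReal_re] at this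
  linarith

lemma norm_smul_add_smul_add_smul_sq {F : Type*} [NormedAddCommGroup F] [InnerProductSpace ℝ F]
    (x y z : ℝ) (u v w : F) :
    ‖x • u + y • v + z • w‖ ^ 2 = x ^ 2 * ‖u‖ ^ 2 + y ^ 2 * ‖v‖ ^ 2 + z ^ 2 * ‖w‖ ^ 2
      + 2 * x * y * ⟪u, v⟫ + 2 * x * z * ⟪u, w⟫ + 2 * y * z * ⟪v, w⟫ := by
  simp only [← real_inner_self_eq_norm_sq, inner_add_left, inner_add_right, inner_smul_left,
    inner_smul_right, real_inner_comm u v, real_inner_comm u w, real_inner_comm v w,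
    RCLike.conj_to_real]
  ring

lemma norm_sum_sgn_smul_le_two {F : Type*} [NormedAddCommGroup F] [InnerProductSpace ℝ F]
    {n : Fin 3 → F} (hn : ∀ i, ‖n i‖ = 1) (hinner : ∀ i j, i ≠ j → ⟪n i, n j⟫ = -(1 / 2))
    (f : Fin 3 → Bool) : ‖∑ i, sgn (f i) • n i‖ ≤ 2 := by
  rw [← sq_le_sq₀ (norm_nonneg _) zero_le_two, Fin.sum_univ_three,
    norm_smul_add_smul_add_smul_sq, hn, hn, hn, hinner 0 1 (by decide),
    hinner 0 2 (by decide), hinner 1 2 (by decide)]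
  cases f 0 <;> cases f 1 <;> cases f 2 <;> norm_num [sgn]

noncomputable def pairJoint (η c : ℝ) (m u v : E³) (a b : Bool) : Matrix (Fin 2) (Fin 2) ℂ :=
  bloch ((1 + sgn a * sgn b * c) / 4)
    ((η * sgn a / 4) • u + (η * sgn b / 4) • v + (sgn a * sgn b / 4) • m)

section pairJoint

variable (η c : ℝ) (m u v : E³)

lemma sum_pairJoint_right (a : Bool) :
    ∑ b, pairJoint η c m u v a b = noisyQubitEffect η u a := by
  rw [Fintype.sum_bool, pairJoint, pairJoint, bloch_add, noisyQubitEffect_eq_bloch]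
  congr 1
  · cases a <;> norm_num [sgn] <;> ring
  · cases a <;> norm_num [sgn] <;> module

lemma sum_pairJoint_left (b : Bool) :
    ∑ a, pairJoint η c m u v a b = noisyQubitEffect η v b := by
  rw [Fintype.sum_bool, pairJoint, pairJoint, bloch_add, noisyQubitEffect_eq_bloch]
  congr 1
  · cases b <;> norm_num [sgn] <;> ring
  · cases b <;> norm_num [sgn] <;> module

lemma pairJoint_anticorrelation :
    pairJoint η c m u v true false + pairJoint η c m u v false true
      = bloch ((1 - c) / 2) ((-(1 / 2) : ℝ) • m) := by
  rw [pairJoint, pairJoint, bloch_add]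
  congr 1
  · norm_num [sgn]
    ring
  · norm_num [sgn]
    module

lemma re_trace_mul_pairJoint_anticorrelation (r : E³) :
    (bloch (1 / 2) ((1 / 2 : ℝ) • r) *
      (pairJoint η c m u v true false + pairJoint η c m u v false true)).trace.re
      = (1 - c - ⟪r, m⟫) / 2 := by
  rw [pairJoint_anticorrelation, trace_bloch_mul_bloch, inner_smul_left, inner_smul_right]
  norm_num
  ring

variable {η c m u v}

lemma pairJoint_posSemidef (hu : ‖u‖ = 1) (hv : ‖v‖ = 1) (huv : ⟪u, v⟫ = -(1 / 2))
    (hum : ⟪u, m⟫ = 0) (hvm : ⟪v, m⟫ = 0) (hc : |c| ≤ 1)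
    (hcorr : η ^ 2 + ‖m‖ ^ 2 ≤ (1 + c) ^ 2) (hanti : 3 * η ^ 2 + ‖m‖ ^ 2 ≤ (1 - c) ^ 2)
    (a b : Bool) : (pairJoint η c m u v a b).PosSemidef := by
  obtain ⟨hc₁, hc₂⟩ := abs_le.mp hc
  apply bloch_posSemidef
  rw [← sq_le_sq₀ (norm_nonneg _) (by cases a <;> cases b <;> norm_num [sgn] <;> linarith),
    norm_smul_add_smul_add_smul_sq, hu, hv, huv, hum, hvm]
  cases a <;> cases b <;> norm_num [sgn] <;> nlinarith

end pairJoint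

noncomputable def trine : Fin 3 → E³ :=
  ![!₂[0, 0, 1], !₂[√3 / 2, 0, -(1 / 2)], !₂[-(√3 / 2), 0, -(1 / 2)]]

lemma trine_apply_one (i : Fin 3) : trine i 1 = 0 := by
  fin_cases i <;> simp [trine]

lemma norm_trine (i : Fin 3) : ‖trine i‖ = 1 := by
  have h3 : √3 ^ 2 = 3 := Real.sq_sqrt (by norm_num)
  rw [← pow_eq_one_iff_of_nonneg (norm_nonneg _) two_ne_zero, EuclideanSpace.real_norm_sq_eq]
  fin_cases i <;> simp [Fin.sum_univ_three, trine] <;> linear_combination (1 / 4 : ℝ) * h3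

lemma inner_trine {i j : Fin 3} (hij : i ≠ j) : ⟪trine i, trine j⟫ = -(1 / 2) := by
  fin_cases i <;> fin_cases j <;> simp_all [PiLp.inner_apply, Fin.sum_univ_three, trine] <;>
    linear_combination (-(1 / 4) : ℝ) * Real.mul_self_sqrt (show (0 : ℝ) ≤ 3 by norm_num)

noncomputable def yAxis : E³ := !₂[0, 1, 0]

lemma inner_trine_yAxis (i : Fin 3) : ⟪trine i, yAxis⟫ = 0 := by
  simp [PiLp.inner_apply, Fin.sum_univ_three, yAxis, trine_apply_one]

lemma norm_yAxis : ‖yAxis‖ = 1 := by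
  rw [← pow_eq_one_iff_of_nonneg (norm_nonneg _) two_ne_zero, EuclideanSpace.real_norm_sq_eq]
  simp [Fin.sum_univ_three, yAxis]

lemma not_jointPOVM_of_trine {n : Fin 3 → E³} (hn : ∀ i, ‖n i‖ = 1)
    (hinner : ∀ i j, i ≠ j → ⟪n i, n j⟫ = -(1 / 2)) {η : ℝ} (hη : 2 / 3 < η) :
    ¬ ∃ T : (Fin 3 → Bool) → Matrix (Fin 2) (Fin 2) ℂ,
      (∀ f, (T f).PosSemidef) ∧ (∑ f, T f = 1) ∧
      ∀ i a, ∑ f ∈ Finset.univ.filter (fun f => f i = a), T f = noisyQubitEffect η (n i) a := by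
  rintro ⟨T, hT, hsum, hmarg⟩
  have := card_mul_le_of_jointPOVM hn (norm_sum_sgn_smul_le_two hn hinner) hT hsum hmarg
  norm_num at this
  linarith

lemma pairJoint_trine_posSemidef {i j : Fin 3} (hij : i ≠ j) (a b : Bool) :
    Matrix.PosSemidef
      (pairJoint (17 / 25) (-(23 / 100)) ((-(17 / 50) : ℝ) • yAxis) (trine i) (trine j) a b) := by
  have hm : ‖(-(17 / 50) : ℝ) • yAxis‖ = 17 / 50 := by simp [norm_smul, norm_yAxis]
  refine pairJoint_posSemidef (norm_trine i) (norm_trine j) (inner_trine hij) ?_ ?_ ?_ ?_ ?_ a b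
  · simp [inner_smul_right, inner_trine_yAxis]
  · simp [inner_smul_right, inner_trine_yAxis]
  · norm_num [abs_le]
  · rw [hm]
    norm_num
  · rw [hm]
    norm_num

/-- **Quantum violation of the LSW inequality.** There exist a sharpness `η ∈ (2/3, √3 − 1)`,
trine measurement directions coplanar in the z–x plane of the Bloch sphere, a qubit state `ρ`,
and pairwise joint POVMs `G^{ij}` marginalizing to the noisy qubit POVMs `M_i, M_j`, such that
the three POVMs admit no triplewise joint POVM and the average anticorrelation probability
exceeds the LSW bound `1 − η/3`. -/
theorem lsw_inequality_quantum_violation :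
    ∃ η : ℝ, (2 / 3 < η ∧ η < Real.sqrt 3 - 1) ∧
    ∃ nhat : Fin 3 → EuclideanSpace ℝ (Fin 3),
      (∀ i, ‖nhat i‖ = 1) ∧
      (∀ i j, i ≠ j → ⟪nhat i, nhat j⟫ = -(1 / 2)) ∧
      (∀ i, nhat i 1 = 0) ∧
      ∃ ρ : Matrix (Fin 2) (Fin 2) ℂ, ρ.PosSemidef ∧ ρ.trace = 1 ∧
      ∃ G : Fin 3 → Fin 3 → Bool → Bool → Matrix (Fin 2) (Fin 2) ℂ,
        (∀ i j, i < j →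
          (∀ a b, (G i j a b).PosSemidef) ∧
          (∑ a : Bool, ∑ b : Bool, G i j a b) = 1 ∧
          (∀ a, ∑ b : Bool, G i j a b = noisyQubitEffect η (nhat i) a) ∧
          (∀ b, ∑ a : Bool, G i j a b = noisyQubitEffect η (nhat j) b)) ∧
        (¬ ∃ T : (Fin 3 → Bool) → Matrix (Fin 2) (Fin 2) ℂ,
            (∀ f, (T f).PosSemidef) ∧ (∑ f, T f = 1) ∧
            ∀ i a, ∑ f ∈ Finset.univ.filter (fun f => f i = a), T f
                = noisyQubitEffect η (nhat i) a) ∧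
        1 - η / 3 <
          (1 / 3 : ℝ) * ((ρ * (G 0 1 true false + G 0 1 false true)).trace.re +
            (ρ * (G 1 2 true false + G 1 2 false true)).trace.re +
            (ρ * (G 0 2 true false + G 0 2 false true)).trace.re) := by
  -- `η = 17/25`, `c = -23/100` and `m = -(17/50) ŷ` satisfy both positivity constraints of
  -- `pairJoint` with a little room, and give anticorrelation `157/200 > 58/75 = 1 - η/3`.
  set G : Fin 3 → Fin 3 → Bool → Bool → Matrix (Fin 2) (Fin 2) ℂ := fun i j =>
    pairJoint (17 / 25) (-(23 / 100)) ((-(17 / 50) : ℝ) • yAxis) (trine i) (trine j)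
  set ρ := bloch (1 / 2) ((1 / 2 : ℝ) • yAxis)
  have anticorrelation (i j : Fin 3) :
      (ρ * (G i j true false + G i j false true)).trace.re = 157 / 200 := by
    rw [re_trace_mul_pairJoint_anticorrelation, inner_smul_right, real_inner_self_eq_norm_sq,
      norm_yAxis]
    norm_num
  refine ⟨17 / 25, ⟨by norm_num, ?_⟩, trine, norm_trine, fun i j => inner_trine, trine_apply_one,
    ρ, bloch_posSemidef ?_, by simp [ρ, trace_bloch], G, fun i j hij =>
      ⟨pairJoint_trine_posSemidef hij.ne,
        by simp only [G, sum_pairJoint_right, sum_noisyQubitEffect],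
        sum_pairJoint_right _ _ _ _ _, sum_pairJoint_left _ _ _ _ _⟩,
    not_jointPOVM_of_trine norm_trine (fun _ _ => inner_trine) (by norm_num), ?_⟩
  · rw [lt_sub_iff_add_lt, Real.lt_sqrt (by norm_num)]
    norm_num
  · simp [norm_smul, norm_yAxis]
  · rw [anticorrelation, anticorrelation, anticorrelation]
    norm_num
end

section
/- Let N ≥ 1, let K_1, …, K_N be nonempty finite sets, let 𝒮 be a collection of subsets of {1,…,N}, and for each S ∈ 𝒮 let p_S be a probability distribution on Π_{s∈S} K_s. Then the following are equivalent: (1) there exists a probability distribution p on K_1 × ⋯ × K_N whose marginal on each S ∈ 𝒮 equals p_S; (2) there exist a finite set Λ, a probability distribution μ on Λ, and outcome-deterministic response functions ξ_i : K_i × Λ → {0,1} with Σ_{k∈K_i} ξ_i(k,λ) = 1 for all i and λ, such that for every S ∈ 𝒮 and every outcome tuple (k_s)_{s∈S}, p_S((k_s)_{s∈S}) = Σ_{λ∈Λ} μ(λ) Π_{s∈S} ξ_s(k_s,λ); (3) the same as (2) except the response functions are allowed to be outcome-indeterministic, ξ_i : K_i × Λ → [0,1] with Σ_{k∈K_i}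 ξ_i(k,λ) = 1. (Fine's theorem adapted to noncontextual models: a KS-noncontextual model exists iff a measurement-noncontextual factorizable model exists iff a global joint distribution exists.) -/
/-!
A global joint distribution `q` is itself an outcome-deterministic noncontextual model: take the
global outcome assignments `f` as hidden variables, with response `ξ i k f = [f i = k]`.
Conversely, a factorizable model `(μ, ξ)` yields the global distribution
`q f = ∑ λ, μ λ * ∏ i, ξ i (f i) λ`; its marginal on `S` is the observed one because each
`ξ i · λ` sums to `1`, so summing out the coordinates outside `S` leaves `∏ i ∈ S, ξ i (g i) λ`.
-/

open Finset

section Marginal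

variable {ι : Type*} [Fintype ι] [DecidableEq ι] {K : ι → Type*}
  [∀ i, Fintype (K i)] [∀ i, DecidableEq (K i)]

theorem sum_filter_restrict_eq_prod_of_sum_eq_one (w : ∀ i, K i → ℝ) (hw : ∀ i, ∑ k, w i k = 1)
    (S : Finset ι) (g : ∀ i : S, K i) :
    ∑ f ∈ univ.filter (fun f : ∀ i, K i => ∀ i : S, f i = g i), ∏ i, w i (f i) =
      ∏ i : S, w i (g i) := by
  -- Cut each factor `w i` down to the single outcome `g i` on `S`; the sum then factorizes.
  set v : ∀ i, K i → ℝ := fun i k => if h : i ∈ S then (if k = g ⟨i, h⟩ then w i k else 0)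
    else w i k
  have restrict_eq : ∀ f : ∀ i, K i,
      (if ∀ i : S, f i = g i then ∏ i, w i (f i) else 0) = ∏ i, v i (f i) := by
    intro f
    split_ifs with hf
    · refine prod_congr rfl fun i _ => ?_
      by_cases hi : i ∈ S <;> simp [v, hi, hf ⟨i, _⟩]
    · push Not at hf
      obtain ⟨i, hi⟩ := hf
      exact (prod_eq_zero (mem_univ i.1) (by simp [v, hi])).symm
  have sum_v : ∀ i, ∑ k, v i k = if h : i ∈ S then w i (g ⟨i, h⟩) else 1 := by
    intro i
    by_cases hi : i ∈ S <;> simp [v, hi, hw]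
  calc ∑ f ∈ univ.filter (fun f : ∀ i, K i => ∀ i : S, f i = g i), ∏ i, w i (f i)
      = ∏ i, ∑ k, v i k := by
        rw [sum_filter, Fintype.prod_sum]
        exact sum_congr rfl fun f _ => restrict_eq f
    _ = ∏ i ∈ S, (if h : i ∈ S then w i (g ⟨i, h⟩) else 1) := by
        rw [prod_subset (subset_univ S) fun i _ hi => dif_neg hi]
        exact prod_congr rfl fun i _ => sum_v i
    _ = ∏ i : S, w i (g i) := by
        rw [← prod_coe_sort]
        exact prod_congr rfl fun i _ => dif_pos i.2

end Marginal

section Models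

variable {ι : Type*} {K : ι → Type*} [∀ i, Fintype (K i)]
  (𝒮 : Set (Finset ι)) (p : (S : Finset ι) → ((i : S) → K i.1) → ℝ)

def IsGlobalJointDistribution [Fintype ι] [DecidableEq ι] [∀ i, DecidableEq (K i)]
    (q : (∀ i, K i) → ℝ) : Prop :=
  (∀ f, 0 ≤ q f) ∧ (∑ f, q f = 1) ∧
    ∀ S ∈ 𝒮, ∀ g : (i : S) → K i.1,
      p S g = ∑ f ∈ univ.filter (fun f => ∀ i : S, f i.1 = g i), q f

def IsNoncontextualModel {Λ : Type*} [Fintype Λ] (valid : ℝ → Prop) (μ : Λ → ℝ)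
    (ξ : ∀ i, K i → Λ → ℝ) : Prop :=
  (∀ l, 0 ≤ μ l) ∧ (∑ l, μ l = 1) ∧
    (∀ i k l, valid (ξ i k l)) ∧
    (∀ i l, ∑ k, ξ i k l = 1) ∧
    ∀ S ∈ 𝒮, ∀ g : (i : S) → K i.1,
      p S g = ∑ l, μ l * ∏ i : S, ξ i.1 (g i) l

variable {𝒮 p}

namespace IsNoncontextualModel

variable {Λ : Type*} [Fintype Λ] {valid : ℝ → Prop} {μ : Λ → ℝ} {ξ : ∀ i, K i → Λ → ℝ}

theorem mono {valid' : ℝ → Prop} (h : IsNoncontextualModel 𝒮 p valid μ ξ)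
    (hvalid : ∀ x, valid x → valid' x) : IsNoncontextualModel 𝒮 p valid' μ ξ :=
  let ⟨hμ, hμ₁, hξ, hξ₁, hp⟩ := h
  ⟨hμ, hμ₁, fun i k l => hvalid _ (hξ i k l), hξ₁, hp⟩

theorem comp_equiv {Λ' : Type*} [Fintype Λ'] (h : IsNoncontextualModel 𝒮 p valid μ ξ)
    (e : Λ' ≃ Λ) : IsNoncontextualModel 𝒮 p valid (μ ∘ e) (fun i k l => ξ i k (e l)) := by
  obtain ⟨hμ, hμ₁, hξ, hξ₁, hp⟩ := h
  refine ⟨fun l => hμ _, ?_, fun i k l => hξ i k _, fun i l => hξ₁ i _, fun S hS g => ?_⟩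
  · rwa [← e.sum_comp] at hμ₁
  · rw [hp S hS g, ← e.sum_comp]
    rfl

theorem exists_fin (h : IsNoncontextualModel 𝒮 p valid μ ξ) :
    ∃ (m : ℕ) (μ' : Fin m → ℝ) (ξ' : ∀ i, K i → Fin m → ℝ),
      IsNoncontextualModel 𝒮 p valid μ' ξ' :=
  ⟨_, _, _, h.comp_equiv (Fintype.equivFin Λ).symm⟩

theorem isGlobalJointDistribution [Fintype ι] [DecidableEq ι] [∀ i, DecidableEq (K i)]
    (h : IsNoncontextualModel 𝒮 p (fun x => 0 ≤ x ∧ x ≤ 1) μ ξ) :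
    IsGlobalJointDistribution 𝒮 p fun f => ∑ l, μ l * ∏ i, ξ i (f i) l := by
  obtain ⟨hμ, hμ₁, hξ, hξ₁, hp⟩ := h
  refine ⟨fun f => sum_nonneg fun l _ => mul_nonneg (hμ l) (prod_nonneg fun i _ => (hξ ..).1),
    ?_, fun S hS g => ?_⟩
  · rw [sum_comm, ← hμ₁]
    refine sum_congr rfl fun l _ => ?_
    rw [← mul_sum, ← Fintype.prod_sum (fun i k => ξ i k l)]
    simp [hξ₁ _ l]
  · rw [hp S hS g, sum_comm]
    refine sum_congr rfl fun l _ => ?_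
    rw [← mul_sum, sum_filter_restrict_eq_prod_of_sum_eq_one (fun i k => ξ i k l) (hξ₁ · l)]

end IsNoncontextualModel

theorem IsGlobalJointDistribution.isNoncontextualModel [Fintype ι] [DecidableEq ι]
    [∀ i, DecidableEq (K i)] {q : (∀ i, K i) → ℝ}
    (h : IsGlobalJointDistribution 𝒮 p q) :
    IsNoncontextualModel 𝒮 p (fun x => x = 0 ∨ x = 1) q
      (fun i k f => if f i = k then 1 else 0) := by
  obtain ⟨hq, hq₁, hp⟩ := h
  refine ⟨hq, hq₁, fun i k f => by dsimp only; split_ifs <;> simp, fun i f => by simp,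
    fun S hS g => ?_⟩
  rw [hp S hS g, sum_filter]
  refine sum_congr rfl fun f _ => ?_
  split_ifs with hf
  · simp [hf]
  · push Not at hf
    obtain ⟨i, hi⟩ := hf
    rw [prod_eq_zero (mem_univ i) (if_neg hi), mul_zero]

end Models

theorem fine_theorem_for_noncontextual_models_general
    (N : ℕ) (K : Fin N → Type*)
    [∀ i, Fintype (K i)] [∀ i, DecidableEq (K i)]
    (𝒮 : Set (Finset (Fin N)))
    (p : (S : Finset (Fin N)) → ((i : S) → K i.1) → ℝ) :
    ((∃ q : ((i : Fin N) → K i) → ℝ,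
        (∀ f, 0 ≤ q f) ∧ (∑ f, q f = 1) ∧
        ∀ S ∈ 𝒮, ∀ g : (i : S) → K i.1,
          p S g = ∑ f ∈ Finset.univ.filter (fun f => ∀ i : S, f i.1 = g i), q f) ↔
      (∃ (m : ℕ) (μ : Fin m → ℝ) (ξ : (i : Fin N) → K i → Fin m → ℝ),
        (∀ l, 0 ≤ μ l) ∧ (∑ l, μ l = 1) ∧
        (∀ i k l, ξ i k l = 0 ∨ ξ i k l = 1) ∧
        (∀ i l, ∑ k, ξ i k l = 1) ∧
        ∀ S ∈ 𝒮, ∀ g : (i : S) → K i.1,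
          p S g = ∑ l, μ l * ∏ i : S, ξ i.1 (g i) l)) ∧
    ((∃ (m : ℕ) (μ : Fin m → ℝ) (ξ : (i : Fin N) → K i → Fin m → ℝ),
        (∀ l, 0 ≤ μ l) ∧ (∑ l, μ l = 1) ∧
        (∀ i k l, ξ i k l = 0 ∨ ξ i k l = 1) ∧
        (∀ i l, ∑ k, ξ i k l = 1) ∧
        ∀ S ∈ 𝒮, ∀ g : (i : S) → K i.1,
          p S g = ∑ l, μ l * ∏ i : S, ξ i.1 (g i) l) ↔
      (∃ (m : ℕ) (μ : Fin m → ℝ) (ξ : (i : Fin N) → K i → Fin m → ℝ),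
        (∀ l, 0 ≤ μ l) ∧ (∑ l, μ l = 1) ∧
        (∀ i k l, 0 ≤ ξ i k l ∧ ξ i k l ≤ 1) ∧
        (∀ i l, ∑ k, ξ i k l = 1) ∧
        ∀ S ∈ 𝒮, ∀ g : (i : S) → K i.1,
          p S g = ∑ l, μ l * ∏ i : S, ξ i.1 (g i) l)) := by
  have global_to_deterministic : (∃ q, IsGlobalJointDistribution 𝒮 p q) →
      ∃ (m : ℕ) (μ : Fin m → ℝ) (ξ : ∀ i, K i → Fin m → ℝ),
        IsNoncontextualModel 𝒮 p (fun x => x = 0 ∨ x = 1) μ ξ :=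
    fun ⟨_, hq⟩ => hq.isNoncontextualModel.exists_fin
  have deterministic_to_factorizable : (∃ (m : ℕ) (μ : Fin m → ℝ) (ξ : ∀ i, K i → Fin m → ℝ),
        IsNoncontextualModel 𝒮 p (fun x => x = 0 ∨ x = 1) μ ξ) →
      ∃ (m : ℕ) (μ : Fin m → ℝ) (ξ : ∀ i, K i → Fin m → ℝ),
        IsNoncontextualModel 𝒮 p (fun x => 0 ≤ x ∧ x ≤ 1) μ ξ :=
    fun ⟨m, μ, ξ, h⟩ => ⟨m, μ, ξ, h.mono fun x hx => by rcases hx with rfl | rfl <;> norm_num⟩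
  have factorizable_to_global : (∃ (m : ℕ) (μ : Fin m → ℝ) (ξ : ∀ i, K i → Fin m → ℝ),
        IsNoncontextualModel 𝒮 p (fun x => 0 ≤ x ∧ x ≤ 1) μ ξ) →
      ∃ q, IsGlobalJointDistribution 𝒮 p q :=
    fun ⟨_, _, _, h⟩ => ⟨_, h.isGlobalJointDistribution⟩
  exact ⟨⟨global_to_deterministic, factorizable_to_global ∘ deterministic_to_factorizable⟩,
    ⟨deterministic_to_factorizable, global_to_deterministic ∘ factorizable_to_global⟩⟩

/-- **Fine's theorem for noncontextual models.** For measurements `1, …, N` with finite outcome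
sets `K i`, jointly measurable subsets `𝒮`, and observed joint distributions `p S` for `S ∈ 𝒮`,
the following are equivalent: (1) a global joint distribution with the `p S` as marginals
exists; (2) a measurement-noncontextual outcome-deterministic (KS-noncontextual) model exists;
(3) a measurement-noncontextual factorizable model exists. -/
theorem fine_theorem_for_noncontextual_models
    (N : ℕ) (hN : 1 ≤ N) (K : Fin N → Type*)
    [∀ i, Fintype (K i)] [∀ i, DecidableEq (K i)] [∀ i, Nonempty (K i)]
    (𝒮 : Set (Finset (Fin N)))
    (p : (S : Finset (Fin N)) → ((i : S) → K i.1) → ℝ)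
    (hp : ∀ S ∈ 𝒮, (∀ g, 0 ≤ p S g) ∧ ∑ g, p S g = 1) :
    ((∃ q : ((i : Fin N) → K i) → ℝ,
        (∀ f, 0 ≤ q f) ∧ (∑ f, q f = 1) ∧
        ∀ S ∈ 𝒮, ∀ g : (i : S) → K i.1,
          p S g = ∑ f ∈ Finset.univ.filter (fun f => ∀ i : S, f i.1 = g i), q f) ↔
      (∃ (m : ℕ) (μ : Fin m → ℝ) (ξ : (i : Fin N) → K i → Fin m → ℝ),
        (∀ l, 0 ≤ μ l) ∧ (∑ l, μ l = 1) ∧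
        (∀ i k l, ξ i k l = 0 ∨ ξ i k l = 1) ∧
        (∀ i l, ∑ k, ξ i k l = 1) ∧
        ∀ S ∈ 𝒮, ∀ g : (i : S) → K i.1,
          p S g = ∑ l, μ l * ∏ i : S, ξ i.1 (g i) l)) ∧
    ((∃ (m : ℕ) (μ : Fin m → ℝ) (ξ : (i : Fin N) → K i → Fin m → ℝ),
        (∀ l, 0 ≤ μ l) ∧ (∑ l, μ l = 1) ∧
        (∀ i k l, ξ i k l = 0 ∨ ξ i k l = 1) ∧
        (∀ i l, ∑ k, ξ i k l = 1) ∧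
        ∀ S ∈ 𝒮, ∀ g : (i : S) → K i.1,
          p S g = ∑ l, μ l * ∏ i : S, ξ i.1 (g i) l) ↔
      (∃ (m : ℕ) (μ : Fin m → ℝ) (ξ : (i : Fin N) → K i → Fin m → ℝ),
        (∀ l, 0 ≤ μ l) ∧ (∑ l, μ l = 1) ∧
        (∀ i k l, 0 ≤ ξ i k l ∧ ξ i k l ≤ 1) ∧
        (∀ i l, ∑ k, ξ i k l = 1) ∧
        ∀ S ∈ 𝒮, ∀ g : (i : S) → K i.1,
          p S g = ∑ l, μ l * ∏ i : S, ξ i.1 (g i) l)) :=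
  fine_theorem_for_noncontextual_models_general N K 𝒮 p
end

section
/- Let p₁, p₂, p₃, w₁₂, w₂₃, w₁₃ ∈ [0,1] satisfy, for each pair (ij) ∈ {(12),(23),(13)}, the consistency constraints |p_i − p_j| ≤ w_{ij} ≤ min(p_i + p_j, 2 − p_i − p_j). Then there exists a probability distribution p on {0,1}³ such that for each i ∈ {1,2,3} the marginal satisfies P(X_i = 0) = p_i and for each pair (ij) the marginal satisfies P(X_i ≠ X_j) = w_{ij}, if and only if the four Kochen–Specker inequalities hold: w₁₂ + w₂₃ + w₁₃ ≤ 2, w₁₂ ≤ w₂₃ + w₁₃, w₂₃ ≤ w₁₂ + w₁₃, and w₁₃ ≤ w₁₂ + w₂₃. -/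
/-!
Necessity: pointwise, three Boolean values disagree in at most two of their three pairs, and
disagreement satisfies the triangle inequality; integrating against a nonnegative weight gives
the four KS inequalities.

Sufficiency: a weight on `{0,1}³` with the prescribed marginals is determined by the weight `t`
of `(1,1,1)` (inclusion–exclusion), so the admissible models form a segment parametrised by `t`.
Its eight atoms are nonnegative iff `t` lies between four lower and four upper affine bounds,
and each lower bound is below each upper bound by exactly one consistency constraint or one KS
inequality.
-/

open Finset

@[to_additive]
theorem Fin.prod_univ_fun_succ {M α : Type*} [CommMonoid M] [Fintype α] {n : ℕ}
    (g : (Fin (n + 1) → α) → M) :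
    ∏ f, g f = ∏ x, ∏ f : Fin n → α, g (Matrix.vecCons x f) :=
  ((Fin.consEquiv _).prod_comp g).symm.trans (Fintype.prod_prod_type _)

theorem exists_forall_le_and_forall_le {ι κ β : Type*} [ConditionallyCompleteLattice β]
    [Finite ι] [Nonempty ι] {l : ι → β} {u : κ → β} (h : ∀ i j, l i ≤ u j) :
    ∃ t, (∀ i, l i ≤ t) ∧ ∀ j, t ≤ u j :=
  ⟨⨆ i, l i, fun i => le_ciSup (Set.finite_range l).bddAbove i,
    fun j => ciSup_le fun i => h i j⟩

section Disagreement

variable {Ω : Type*} [Fintype Ω]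

def disagreement {α : Type*} [DecidableEq α] (q : Ω → ℝ) (X Y : Ω → α) : ℝ :=
  ∑ ω ∈ univ.filter (fun ω => X ω ≠ Y ω), q ω

theorem ks_inequalities_of_nonneg {q : Ω → ℝ} (hq : ∀ ω, 0 ≤ q ω) (X Y Z : Ω → Bool) :
    disagreement q X Y + disagreement q Y Z + disagreement q X Z ≤ 2 * ∑ ω, q ω ∧
      disagreement q X Y ≤ disagreement q Y Z + disagreement q X Z ∧
      disagreement q Y Z ≤ disagreement q X Y + disagreement q X Z ∧
      disagreement q X Z ≤ disagreement q X Y + disagreement q Y Z := by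
  refine ⟨?_, ?_, ?_, ?_⟩ <;>
  · simp only [disagreement, sum_filter, ← sum_add_distrib, mul_sum]
    refine sum_le_sum fun ω _ => ?_
    have := hq ω
    cases X ω <;> cases Y ω <;> cases Z ω <;> norm_num <;> linarith

end Disagreement

section Construction

variable (p₁ p₂ p₃ w₁₂ w₂₃ w₁₃ : ℝ)

/-- Outcome `0` is `false`. The weight of `(1,1,1)` is `t`; the other atoms are forced by
inclusion–exclusion, `(2 - pᵢ - pⱼ - wᵢⱼ) / 2` being the weight of `Xᵢ = Xⱼ = 1`. -/
noncomputable def speckerAtom (t : ℝ) : Bool → Bool → Bool → ℝ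
  | true, true, true => t
  | true, true, false => (2 - p₁ - p₂ - w₁₂) / 2 - t
  | true, false, true => (2 - p₁ - p₃ - w₁₃) / 2 - t
  | false, true, true => (2 - p₂ - p₃ - w₂₃) / 2 - t
  | true, false, false => t - (2 - p₂ - p₃ - w₁₂ - w₁₃) / 2
  | false, true, false => t - (2 - p₁ - p₃ - w₁₂ - w₂₃) / 2
  | false, false, true => t - (2 - p₁ - p₂ - w₁₃ - w₂₃) / 2
  | false, false, false => (2 - w₁₂ - w₂₃ - w₁₃) / 2 - t

theorem speckerAtom_marginals (t : ℝ) :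
    let q : (Fin 3 → Bool) → ℝ := fun f => speckerAtom p₁ p₂ p₃ w₁₂ w₂₃ w₁₃ t (f 0) (f 1) (f 2)
    ∑ f, q f = 1 ∧
      ∑ f ∈ univ.filter (fun f : Fin 3 → Bool => f 0 = false), q f = p₁ ∧
      ∑ f ∈ univ.filter (fun f : Fin 3 → Bool => f 1 = false), q f = p₂ ∧
      ∑ f ∈ univ.filter (fun f : Fin 3 → Bool => f 2 = false), q f = p₃ ∧
      disagreement q (· 0) (· 1) = w₁₂ ∧
      disagreement q (· 1) (· 2) = w₂₃ ∧
      disagreement q (· 0) (· 2) = w₁₃ := by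
  refine ⟨?_, ?_, ?_, ?_, ?_, ?_, ?_⟩ <;>
  · simp only [disagreement, sum_filter, Fin.sum_univ_fun_succ, Fintype.sum_bool,
      Fintype.sum_unique, Matrix.cons_val_zero, Matrix.cons_val_one, Matrix.cons_val_two,
      speckerAtom]
    norm_num
    ring

variable {p₁ p₂ p₃ w₁₂ w₂₃ w₁₃}

theorem exists_speckerAtom_nonneg
    (hc₁₂ : |p₁ - p₂| ≤ w₁₂ ∧ w₁₂ ≤ min (p₁ + p₂) (2 - p₁ - p₂))
    (hc₂₃ : |p₂ - p₃| ≤ w₂₃ ∧ w₂₃ ≤ min (p₂ + p₃) (2 - p₂ - p₃))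
    (hc₁₃ : |p₁ - p₃| ≤ w₁₃ ∧ w₁₃ ≤ min (p₁ + p₃) (2 - p₁ - p₃))
    (hks : w₁₂ + w₂₃ + w₁₃ ≤ 2 ∧ w₁₂ ≤ w₂₃ + w₁₃ ∧ w₂₃ ≤ w₁₂ + w₁₃ ∧ w₁₃ ≤ w₁₂ + w₂₃) :
    ∃ t, ∀ x y z, 0 ≤ speckerAtom p₁ p₂ p₃ w₁₂ w₂₃ w₁₃ t x y z := by
  obtain ⟨h₁₂, h₂₁⟩ := abs_le.mp hc₁₂.1
  obtain ⟨h₂₃, h₃₂⟩ := abs_le.mp hc₂₃.1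
  obtain ⟨h₁₃, h₃₁⟩ := abs_le.mp hc₁₃.1
  obtain ⟨s₁₂, s₁₂'⟩ := le_min_iff.mp hc₁₂.2
  obtain ⟨s₂₃, s₂₃'⟩ := le_min_iff.mp hc₂₃.2
  obtain ⟨s₁₃, s₁₃'⟩ := le_min_iff.mp hc₁₃.2
  obtain ⟨ks, ks₁₂, ks₂₃, ks₁₃⟩ := hks
  have hbounds : ∀ i j,
      ![0, (2 - p₂ - p₃ - w₁₂ - w₁₃) / 2, (2 - p₁ - p₃ - w₁₂ - w₂₃) / 2,
        (2 - p₁ - p₂ - w₁₃ - w₂₃) / 2] i ≤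
      ![(2 - p₁ - p₂ - w₁₂) / 2, (2 - p₁ - p₃ - w₁₃) / 2, (2 - p₂ - p₃ - w₂₃) / 2,
        (2 - w₁₂ - w₂₃ - w₁₃) / 2] j := by
    intro i j
    fin_cases i <;> fin_cases j <;> simp <;> linarith
  obtain ⟨t, hlower, hupper⟩ := exists_forall_le_and_forall_le hbounds
  simp only [Fin.forall_fin_succ, IsEmpty.forall_iff, Matrix.cons_val_zero, Matrix.cons_val_succ,
    and_true] at hlower hupper
  refine ⟨t, fun x y z => ?_⟩
  cases x <;> cases y <;> cases z <;> simp only [speckerAtom] <;> linarith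

end Construction

theorem specker_KS_polytope_characterization_general
    (p₁ p₂ p₃ w₁₂ w₂₃ w₁₃ : ℝ)
    (hc₁₂ : |p₁ - p₂| ≤ w₁₂ ∧ w₁₂ ≤ min (p₁ + p₂) (2 - p₁ - p₂))
    (hc₂₃ : |p₂ - p₃| ≤ w₂₃ ∧ w₂₃ ≤ min (p₂ + p₃) (2 - p₂ - p₃))
    (hc₁₃ : |p₁ - p₃| ≤ w₁₃ ∧ w₁₃ ≤ min (p₁ + p₃) (2 - p₁ - p₃)) :
    (∃ q : (Fin 3 → Bool) → ℝ,
        (∀ f, 0 ≤ q f) ∧ (∑ f, q f = 1) ∧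
        (∑ f ∈ Finset.univ.filter (fun f : Fin 3 → Bool => f 0 = false), q f) = p₁ ∧
        (∑ f ∈ Finset.univ.filter (fun f : Fin 3 → Bool => f 1 = false), q f) = p₂ ∧
        (∑ f ∈ Finset.univ.filter (fun f : Fin 3 → Bool => f 2 = false), q f) = p₃ ∧
        (∑ f ∈ Finset.univ.filter (fun f : Fin 3 → Bool => f 0 ≠ f 1), q f) = w₁₂ ∧
        (∑ f ∈ Finset.univ.filter (fun f : Fin 3 → Bool => f 1 ≠ f 2), q f) = w₂₃ ∧
        (∑ f ∈ Finset.univ.filter (fun f : Fin 3 → Bool => f 0 ≠ f 2), q f) = w₁₃) ↔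
      (w₁₂ + w₂₃ + w₁₃ ≤ 2 ∧ w₁₂ ≤ w₂₃ + w₁₃ ∧ w₂₃ ≤ w₁₂ + w₁₃ ∧ w₁₃ ≤ w₁₂ + w₂₃) := by
  constructor
  · rintro ⟨q, hq, hsum, -, -, -, rfl, rfl, rfl⟩
    have hks := ks_inequalities_of_nonneg hq (· 0) (· 1) (· 2)
    rwa [hsum, mul_one] at hks
  · intro hks
    obtain ⟨t, ht⟩ := exists_speckerAtom_nonneg hc₁₂ hc₂₃ hc₁₃ hks
    exact ⟨_, fun f => ht (f 0) (f 1) (f 2), speckerAtom_marginals p₁ p₂ p₃ w₁₂ w₂₃ w₁₃ t⟩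

/-- **The KS-noncontextuality polytope of Specker's scenario.** Given marginal probabilities
`p₁, p₂, p₃` and anticorrelation probabilities `w₁₂, w₂₃, w₁₃` in `[0,1]` satisfying the
consistency constraints `|p_i − p_j| ≤ w_{ij} ≤ min(p_i + p_j, 2 − p_i − p_j)`, a global joint
distribution on `{0,1}³` reproducing them exists iff the four Kochen–Specker inequalities
hold. (Outcome `0` of measurement `i` is encoded by `f i = false`.) -/
theorem specker_KS_polytope_characterization
    (p₁ p₂ p₃ w₁₂ w₂₃ w₁₃ : ℝ)
    (hp₁ : p₁ ∈ Set.Icc (0 : ℝ) 1) (hp₂ : p₂ ∈ Set.Icc (0 : ℝ) 1)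
    (hp₃ : p₃ ∈ Set.Icc (0 : ℝ) 1)
    (hw₁₂ : w₁₂ ∈ Set.Icc (0 : ℝ) 1) (hw₂₃ : w₂₃ ∈ Set.Icc (0 : ℝ) 1)
    (hw₁₃ : w₁₃ ∈ Set.Icc (0 : ℝ) 1)
    (hc₁₂ : |p₁ - p₂| ≤ w₁₂ ∧ w₁₂ ≤ min (p₁ + p₂) (2 - p₁ - p₂))
    (hc₂₃ : |p₂ - p₃| ≤ w₂₃ ∧ w₂₃ ≤ min (p₂ + p₃) (2 - p₂ - p₃))
    (hc₁₃ : |p₁ - p₃| ≤ w₁₃ ∧ w₁₃ ≤ min (p₁ + p₃) (2 - p₁ - p₃)) :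
    (∃ q : (Fin 3 → Bool) → ℝ,
        (∀ f, 0 ≤ q f) ∧ (∑ f, q f = 1) ∧
        (∑ f ∈ Finset.univ.filter (fun f : Fin 3 → Bool => f 0 = false), q f) = p₁ ∧
        (∑ f ∈ Finset.univ.filter (fun f : Fin 3 → Bool => f 1 = false), q f) = p₂ ∧
        (∑ f ∈ Finset.univ.filter (fun f : Fin 3 → Bool => f 2 = false), q f) = p₃ ∧
        (∑ f ∈ Finset.univ.filter (fun f : Fin 3 → Bool => f 0 ≠ f 1), q f) = w₁₂ ∧
        (∑ f ∈ Finset.univ.filter (fun f : Fin 3 → Bool => f 1 ≠ f 2), q f) = w₂₃ ∧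
        (∑ f ∈ Finset.univ.filter (fun f : Fin 3 → Bool => f 0 ≠ f 2), q f) = w₁₃) ↔
      (w₁₂ + w₂₃ + w₁₃ ≤ 2 ∧ w₁₂ ≤ w₂₃ + w₁₃ ∧ w₂₃ ≤ w₁₂ + w₁₃ ∧ w₁₃ ≤ w₁₂ + w₂₃) :=
  specker_KS_polytope_characterization_general p₁ p₂ p₃ w₁₂ w₂₃ w₁₃ hc₁₂ hc₂₃ hc₁₃
end

section
/- Fix d ≥ 1 and a finite set Λ. Suppose μ assigns to every density matrix ρ on ℂ^d (positive semidefinite d×d complex matrix of trace 1) a probability distribution μ(ρ) : Λ → [0,1] with Σ_λ μ(ρ)(λ) = 1, and that μ is convex-linear: μ(tρ + (1−t)σ) = t·μ(ρ) + (1−t)·μ(σ) for all density matrices ρ, σ and t ∈ [0,1] (preparation noncontextuality). Suppose ξ assigns to every rank-one orthogonal projector Π on ℂ^d a function ξ(Π) : Λ → [0,1] such that for every orthonormal basis (ψ_1,…,ψ_d) of ℂ^d, Σ_{i=1}^d ξ(|ψ_i⟩⟨ψ_i|)(λ) = 1 for every λ ∈ Λ, and such that the Born rule is reproduced: Σ_{λ∈Λ}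 ξ(Π)(λ)·μ(ρ)(λ) = Tr(Πρ) for every rank-one projector Π and every density matrix ρ. Then for every rank-one projector Π and every λ ∈ Λ for which there exists a density matrix ρ with μ(ρ)(λ) > 0, one has ξ(Π)(λ) ∈ {0,1}. (Preparation noncontextuality implies outcome determinism for sharp measurements in ontological models of quantum theory.) -/
open scoped BigOperators ComplexOrder

lemma psd_real_smul {n : Type*} [Fintype n] {A : Matrix n n ℂ} (hA : A.PosSemidef)
    {c : ℝ} (hc : 0 ≤ c) : (c • A).PosSemidef := by
  refine ⟨?_, fun x => ?_⟩
  · unfold Matrix.IsHermitian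
    rw [Matrix.conjTranspose_smul, hA.1.eq, star_trivial]
  · exact (hA.smul hc).2 x

lemma trace_outer_mul_outer {n : Type*} [Fintype n] (u v : n → ℂ) :
    ((Matrix.vecMulVec u (star u)) * (Matrix.vecMulVec v (star v))).trace
      = (∑ a, star (u a) * v a) * (∑ a, star (v a) * u a) := by
  rw [Finset.sum_mul_sum]
  rw [Matrix.trace]
  simp only [Matrix.diag_apply, Matrix.mul_apply, Matrix.vecMulVec_apply, Pi.star_apply]
  rw [Finset.sum_comm]
  exact Finset.sum_congr rfl fun b _ => Finset.sum_congr rfl fun a _ => by ring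

lemma vecMulVec_star_psd {n : Type*} [Fintype n] (u : n → ℂ) :
    (Matrix.vecMulVec u (star u)).PosSemidef := by
  rw [Matrix.vecMulVec_eq (Fin 1), ← Matrix.conjTranspose_replicateCol]
  exact Matrix.posSemidef_self_mul_conjTranspose _

lemma one_sub_psd {n : Type*} [Fintype n] [DecidableEq n] {ρ : Matrix n n ℂ}
    (hρ : ρ.PosSemidef) (htr : ρ.trace = 1) : ((1 : Matrix n n ℂ) - ρ).PosSemidef := by
  have hH := hρ.1
  set U : Matrix n n ℂ := (hH.eigenvectorUnitary : Matrix n n ℂ) with hUdef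
  have hU'U : star U * U = 1 := Matrix.mem_unitaryGroup_iff'.mp (Matrix.IsHermitian.eigenvectorUnitary hH).2
  have hUU : U * star U = 1 := Matrix.mem_unitaryGroup_iff.mp (Matrix.IsHermitian.eigenvectorUnitary hH).2
  have hspec : ρ = U * Matrix.diagonal (RCLike.ofReal ∘ hH.eigenvalues) * star U := hH.spectral_theorem
  have htrdiag : (Matrix.diagonal (RCLike.ofReal ∘ hH.eigenvalues) : Matrix n n ℂ).trace = 1 := by
    have : ρ.trace = (U * Matrix.diagonal (RCLike.ofReal ∘ hH.eigenvalues) * star U).trace := by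
      rw [← hspec]
    rw [htr] at this
    rw [Matrix.trace_mul_cycle, hU'U, Matrix.one_mul] at this
    exact this.symm
  have hsum : ∑ i, hH.eigenvalues i = 1 := by
    have : ((∑ i, hH.eigenvalues i : ℝ) : ℂ) = 1 := by
      rw [← htrdiag, Matrix.trace_diagonal]
      push_cast
      rfl
    exact_mod_cast this
  have hle : ∀ i, hH.eigenvalues i ≤ 1 := by
    intro i
    rw [← hsum]
    exact Finset.single_le_sum (fun j _ => hρ.eigenvalues_nonneg j) (Finset.mem_univ i)
  have hdpsd : (Matrix.diagonal (fun i => (1 : ℂ) - (hH.eigenvalues i : ℂ))).PosSemidef := by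
    apply Matrix.PosSemidef.diagonal
    intro i
    have : (0:ℝ) ≤ 1 - hH.eigenvalues i := by linarith [hle i]
    calc (0:ℂ) ≤ ((1 - hH.eigenvalues i : ℝ) : ℂ) := by exact_mod_cast this
    _ = 1 - (hH.eigenvalues i : ℂ) := by push_cast; ring
  have key : (1 : Matrix n n ℂ) - ρ = U * (Matrix.diagonal (fun i => (1 : ℂ) - (hH.eigenvalues i : ℂ))) * star U := by
    have hd : (Matrix.diagonal (fun i => (1 : ℂ) - (hH.eigenvalues i : ℂ)))
        = 1 - Matrix.diagonal (RCLike.ofReal ∘ hH.eigenvalues) := by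
      rw [← Matrix.diagonal_one, Matrix.diagonal_sub]
      rfl
    rw [hd, Matrix.mul_sub, Matrix.mul_one, Matrix.sub_mul, hUU, ← hspec]
  rw [key]
  exact hdpsd.mul_mul_conjTranspose_same U

lemma mix_aux {d : ℕ} {Λ : Type*} [Fintype Λ]
    (μ : Matrix (Fin d) (Fin d) ℂ → Λ → ℝ)
    (hμconv : ∀ ρ σ : Matrix (Fin d) (Fin d) ℂ, ρ.PosSemidef → ρ.trace = 1 →
      σ.PosSemidef → σ.trace = 1 → ∀ t : ℝ, 0 ≤ t → t ≤ 1 →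
      ∀ l, μ (t • ρ + (1 - t) • σ) l = t * μ ρ l + (1 - t) * μ σ l)
    (ρᵢ : Fin d → Matrix (Fin d) (Fin d) ℂ)
    (hpsd : ∀ i, (ρᵢ i).PosSemidef) (htr : ∀ i, (ρᵢ i).trace = 1)
    (s : Finset (Fin d)) (hs : s.Nonempty) :
      ((s.card : ℝ)⁻¹ • ∑ i ∈ s, ρᵢ i).PosSemidef ∧
      ((s.card : ℝ)⁻¹ • ∑ i ∈ s, ρᵢ i).trace = 1 ∧
      ∀ l, μ ((s.card : ℝ)⁻¹ • ∑ i ∈ s, ρᵢ i) l = (s.card : ℝ)⁻¹ * ∑ i ∈ s, μ (ρᵢ i) l := by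
  induction hs using Finset.Nonempty.cons_induction with
  | singleton a =>
    simp only [Finset.card_singleton, Nat.cast_one, inv_one, one_smul, Finset.sum_singleton,
      one_mul]
    exact ⟨hpsd a, htr a, fun _ => trivial⟩
  | cons a s ha hs ih =>
    obtain ⟨ihpsd, ihtr, ihμ⟩ := ih
    have hn : (0:ℝ) < s.card := by exact_mod_cast Finset.card_pos.mpr hs
    set t : ℝ := ((s.card : ℝ) + 1)⁻¹ with ht
    have htpos : 0 < t := by positivity
    have ht1 : t ≤ 1 := by
      rw [ht]
      rw [inv_le_one_iff₀]
      right; linarith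
    have hcard : (((Finset.cons a s ha).card : ℝ)) = (s.card : ℝ) + 1 := by
      rw [Finset.card_cons]; push_cast; ring
    have hne1 : (s.card : ℝ) ≠ 0 := hn.ne'
    have hne2 : (s.card : ℝ) + 1 ≠ 0 := by positivity
    have hscal : (1 - t) * ((s.card : ℝ))⁻¹ = t := by
      rw [ht]; field_simp; ring
    have hkey : ((Finset.cons a s ha).card : ℝ)⁻¹ • ∑ i ∈ Finset.cons a s ha, ρᵢ i
        = t • ρᵢ a + (1 - t) • ((s.card : ℝ)⁻¹ • ∑ i ∈ s, ρᵢ i) := by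
      rw [Finset.sum_cons, hcard, smul_smul, hscal, smul_add]
    refine ⟨?_, ?_, ?_⟩
    · rw [hkey]
      exact (psd_real_smul (hpsd a) htpos.le).add (psd_real_smul ihpsd (by linarith))
    · rw [hkey, Matrix.trace_add, Matrix.trace_smul, Matrix.trace_smul, htr a, ihtr]
      simp only [smul_eq_mul, Complex.real_smul]
      push_cast
      ring
    · intro l
      rw [hkey, hμconv _ _ (hpsd a) (htr a) ihpsd ihtr t htpos.le ht1 l, ihμ l,
        Finset.sum_cons, hcard, ← mul_assoc, hscal, ht]
      ring

/-- **Preparation noncontextuality implies outcome determinism for sharp measurements.**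
Given a convex-linear (preparation-noncontextual) assignment `μ` of finite probability
distributions to density matrices on `ℂ^d`, and a measurement-noncontextual assignment `ξ` of
response functions to rank-one projectors that is normalized on every orthonormal basis and
reproduces the Born rule, the response to every rank-one projector is deterministic on every
ontic state in the support of some quantum state. -/
theorem preparation_noncontextuality_implies_outcome_determinism
    (d : ℕ) (hd : 1 ≤ d) (Λ : Type*) [Fintype Λ]
    (μ : Matrix (Fin d) (Fin d) ℂ → Λ → ℝ)
    (hμprob : ∀ ρ : Matrix (Fin d) (Fin d) ℂ, ρ.PosSemidef → ρ.trace = 1 →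
      (∀ l, 0 ≤ μ ρ l) ∧ ∑ l, μ ρ l = 1)
    (hμconv : ∀ ρ σ : Matrix (Fin d) (Fin d) ℂ, ρ.PosSemidef → ρ.trace = 1 →
      σ.PosSemidef → σ.trace = 1 → ∀ t : ℝ, 0 ≤ t → t ≤ 1 →
      ∀ l, μ (t • ρ + (1 - t) • σ) l = t * μ ρ l + (1 - t) * μ σ l)
    (ξ : Matrix (Fin d) (Fin d) ℂ → Λ → ℝ)
    (hξ01 : ∀ P : Matrix (Fin d) (Fin d) ℂ, P.IsHermitian → P * P = P → P.rank = 1 →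
      ∀ l, ξ P l ∈ Set.Icc (0 : ℝ) 1)
    (hbasis : ∀ ψ : Fin d → (Fin d → ℂ),
      (∀ i j, ∑ a, star (ψ i a) * ψ j a = if i = j then 1 else 0) →
      ∀ l, ∑ i, ξ (Matrix.vecMulVec (ψ i) (star (ψ i))) l = 1)
    (hborn : ∀ P : Matrix (Fin d) (Fin d) ℂ, P.IsHermitian → P * P = P → P.rank = 1 →
      ∀ ρ : Matrix (Fin d) (Fin d) ℂ, ρ.PosSemidef → ρ.trace = 1 →
      ((∑ l, ξ P l * μ ρ l : ℝ) : ℂ) = (P * ρ).trace) :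
    ∀ P : Matrix (Fin d) (Fin d) ℂ, P.IsHermitian → P * P = P → P.rank = 1 →
      ∀ l, (∃ ρ : Matrix (Fin d) (Fin d) ℂ, ρ.PosSemidef ∧ ρ.trace = 1 ∧ 0 < μ ρ l) →
        ξ P l = 0 ∨ ξ P l = 1 := by
  intro P hP hP2 hrank l ⟨ρ, hρ, hρtr, hμpos⟩
  classical
  -- spectral data of P
  set U : Matrix (Fin d) (Fin d) ℂ := (hP.eigenvectorUnitary : Matrix (Fin d) (Fin d) ℂ) with hUdef
  have hU'U : star U * U = 1 := Matrix.mem_unitaryGroup_iff'.mp (Matrix.IsHermitian.eigenvectorUnitary hP).2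
  have hUU : U * star U = 1 := Matrix.mem_unitaryGroup_iff.mp (Matrix.IsHermitian.eigenvectorUnitary hP).2
  set e : Fin d → ℝ := hP.eigenvalues with hedef
  set D : Matrix (Fin d) (Fin d) ℂ := Matrix.diagonal (RCLike.ofReal ∘ e) with hDdef
  have hspec : P = U * D * star U := hP.spectral_theorem
  have hkeyD : star U * P * U = D := by
    rw [hspec]; simp only [← Matrix.mul_assoc, hU'U, Matrix.one_mul]; rw [Matrix.mul_assoc, hU'U, Matrix.mul_one]
  -- eigenvalues are 0 or 1
  have hDD : D * D = D := by
    rw [← hkeyD]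
    have h1 : (star U * P * U) * (star U * P * U) = star U * (P * (U * star U) * P) * U := by
      simp only [Matrix.mul_assoc]
    rw [h1, hUU, Matrix.mul_one, hP2]
  have he2 : ∀ i, e i * e i = e i := by
    intro i
    have h := congrFun (congrFun hDD i) i
    rw [hDdef] at h
    rw [Matrix.diagonal_mul_diagonal] at h
    simp only [Matrix.diagonal_apply_eq, Function.comp_apply, Pi.mul_apply] at h
    exact_mod_cast h
  -- the unique eigenvalue 1
  have hcard : Fintype.card {i // e i ≠ 0} = 1 := by
    have h := hP.rank_eq_card_non_zero_eigs
    rw [hrank] at h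
    exact h.symm
  obtain ⟨⟨i0, hi0⟩, huniq⟩ := Fintype.card_eq_one_iff.mp hcard
  have he1 : e i0 = 1 := by
    have h3 : e i0 * (e i0 - 1) = 0 := by
      have := he2 i0
      nlinarith [this]
    rcases mul_eq_zero.mp h3 with h | h
    · exact absurd h hi0
    · linarith [sub_eq_zero.mp h]
  have he0 : ∀ i, i ≠ i0 → e i = 0 := by
    intro i hi
    by_contra h
    exact hi (congrArg Subtype.val (huniq ⟨i, h⟩))
  -- the orthonormal family of eigenvectors
  set ψ : Fin d → Fin d → ℂ := fun i a => U a i with hψdef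
  have h_on : ∀ i j, ∑ a, star (ψ i a) * ψ j a = if i = j then 1 else 0 := by
    intro i j
    have h := congrFun (congrFun hU'U i) j
    rw [Matrix.mul_apply] at h
    simpa [Matrix.star_eq_conjTranspose, Matrix.conjTranspose_apply, Matrix.one_apply] using h
  set ρᵢ : Fin d → Matrix (Fin d) (Fin d) ℂ := fun i => Matrix.vecMulVec (ψ i) (star (ψ i))
    with hρᵢdef
  have hρᵢpsd : ∀ i, (ρᵢ i).PosSemidef := fun i => vecMulVec_star_psd (ψ i)
  have hρᵢtr : ∀ i, (ρᵢ i).trace = 1 := by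
    intro i
    have h := h_on i i
    rw [if_pos rfl] at h
    rw [hρᵢdef]
    rw [Matrix.trace]
    simp only [Matrix.diag_apply, Matrix.vecMulVec_apply, Pi.star_apply]
    rw [← h]
    exact Finset.sum_congr rfl fun a _ => by ring
  -- P is the outer product of ψ i0
  have hPeq : P = ρᵢ i0 := by
    rw [hspec, hρᵢdef]
    ext a b
    rw [Matrix.mul_apply]
    simp only [hDdef, Matrix.mul_diagonal, Matrix.star_eq_conjTranspose,
      Matrix.conjTranspose_apply, Function.comp_apply, Matrix.vecMulVec_apply, Pi.star_apply]
    rw [Finset.sum_eq_single i0]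
    · rw [he1]
      simp
      rfl
    · intro j _ hj
      rw [he0 j hj]
      simp
    · intro h
      exact absurd (Finset.mem_univ i0) h
  -- resolution of the identity
  have hres : ∑ i, ρᵢ i = 1 := by
    ext a b
    have h := congrFun (congrFun hUU a) b
    rw [Matrix.mul_apply] at h
    rw [Matrix.sum_apply]
    simpa [hρᵢdef, Matrix.vecMulVec_apply, Matrix.star_eq_conjTranspose,
      Matrix.conjTranspose_apply] using h
  -- Born rule values on the basis states
  have hborn_i : ∀ i, (∑ l', ξ P l' * μ (ρᵢ i) l') = if i = i0 then 1 else 0 := by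
    intro i
    have h := hborn P hP hP2 hrank (ρᵢ i) (hρᵢpsd i) (hρᵢtr i)
    have htr2 : ((P * ρᵢ i).trace)
        = (if i0 = i then 1 else 0) * (if i = i0 then 1 else 0) := by
      rw [hPeq]
      have hh : ρᵢ i0 * ρᵢ i
          = Matrix.vecMulVec (ψ i0) (star (ψ i0)) * Matrix.vecMulVec (ψ i) (star (ψ i)) := rfl
      rw [hh, trace_outer_mul_outer, h_on i0 i, h_on i i0]
    rw [htr2] at h
    by_cases hi : i = i0
    · subst hi
      rw [if_pos rfl, mul_one] at h
      rw [if_pos rfl]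
      exact_mod_cast h
    · rw [if_neg (fun hh => hi hh.symm), zero_mul] at h
      rw [if_neg hi]
      exact_mod_cast h
  -- the maximally mixed state dominates ρ
  have hdpos : (0:ℝ) < d := by exact_mod_cast hd
  set σm : Matrix (Fin d) (Fin d) ℂ := (d : ℝ)⁻¹ • (1 : Matrix (Fin d) (Fin d) ℂ) with hσm
  have hmix := mix_aux μ hμconv ρᵢ hρᵢpsd hρᵢtr Finset.univ
    (Finset.univ_nonempty_iff.mpr ⟨⟨0, hd⟩⟩)
  rw [Finset.card_univ, Fintype.card_fin, hres] at hmix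
  obtain ⟨-, -, hmixμ⟩ := hmix
  have hdom : 0 < μ σm l := by
    rcases eq_or_lt_of_le hd with h1 | h2
    · -- d = 1 : ρ is the unique state and equals σm
      have hall : ∀ x y : Fin d, x = y := fun x y => Fin.ext (by omega)
      have hρ1 : ρ = σm := by
        ext a b
        have hab : b = a := hall b a
        subst hab
        have htr' : ρ.trace = ρ b b := by
          rw [Matrix.trace, Finset.sum_eq_single b]
          · rfl
          · intro j _ hj
            exact absurd (hall j b) hj
          · intro h
            exact absurd (Finset.mem_univ b) h
        have hval : ρ b b = 1 := by rw [← htr']; exact hρtr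
        rw [hσm, hval]
        simp [Matrix.smul_apply, Matrix.one_apply, ← h1]
      rw [← hρ1]
      exact hμpos
    · -- d ≥ 2
      set σ : Matrix (Fin d) (Fin d) ℂ := ((d:ℝ) - 1)⁻¹ • ((1 : Matrix (Fin d) (Fin d) ℂ) - ρ)
        with hσdef
      have hd2 : (2:ℝ) ≤ (d:ℝ) := by exact_mod_cast h2
      have hd1 : (0:ℝ) < (d:ℝ) - 1 := by linarith
      have hσpsd : σ.PosSemidef := psd_real_smul (one_sub_psd hρ hρtr) (by positivity)
      have hdC : ((d:ℂ) - 1) ≠ 0 := by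
        refine sub_ne_zero.mpr ?_
        exact_mod_cast (by omega : (d:ℕ) ≠ 1)
      have hσtr : σ.trace = 1 := by
        rw [hσdef, Matrix.trace_smul, Matrix.trace_sub, Matrix.trace_one, hρtr]
        rw [Fintype.card_fin, Complex.real_smul]
        push_cast
        rw [inv_mul_cancel₀ hdC]
      have hcomb : (d:ℝ)⁻¹ • ρ + (1 - (d:ℝ)⁻¹) • σ = σm := by
        rw [hσdef, smul_smul]
        have hs2 : (1 - (d:ℝ)⁻¹) * ((d:ℝ)-1)⁻¹ = (d:ℝ)⁻¹ := by
          field_simp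
        rw [hs2, smul_sub, hσm]
        abel
      have hμdom := hμconv ρ σ hρ hρtr hσpsd hσtr (d:ℝ)⁻¹ (by positivity)
        (by rw [inv_le_one_iff₀]; right; exact_mod_cast hd) l
      rw [hcomb] at hμdom
      have hσnn : 0 ≤ μ σ l := (hμprob σ hσpsd hσtr).1 l
      have htnn : (0:ℝ) < (d:ℝ)⁻¹ := by positivity
      have ht1' : (d:ℝ)⁻¹ ≤ 1 := by
        rw [inv_le_one_iff₀]; right; exact_mod_cast hd
      rw [hμdom]
      have : 0 < (d:ℝ)⁻¹ * μ ρ l := mul_pos htnn hμpos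
      nlinarith
  rw [← hσm] at hmixμ
  have hμσm := hmixμ l
  rw [hμσm] at hdom
  have hsumpos : 0 < ∑ i, μ (ρᵢ i) l := by
    by_contra hS
    push_neg at hS
    have : (d:ℝ)⁻¹ * ∑ i, μ (ρᵢ i) l ≤ 0 :=
      mul_nonpos_of_nonneg_of_nonpos (by positivity) hS
    linarith
  have hex : ∃ i, 0 < μ (ρᵢ i) l := by
    by_contra h
    push_neg at h
    have : ∑ i, μ (ρᵢ i) l ≤ 0 := Finset.sum_nonpos fun i _ => h i
    linarith
  obtain ⟨i, hi⟩ := hex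
  have hξmem := hξ01 P hP hP2 hrank
  have hprob := hμprob (ρᵢ i) (hρᵢpsd i) (hρᵢtr i)
  by_cases hii : i = i0
  · -- ξ P l = 1
    subst hii
    right
    have hb := hborn_i i
    rw [if_pos rfl] at hb
    have hzero : ∑ l', (1 - ξ P l') * μ (ρᵢ i) l' = 0 := by
      have hsplit : ∑ l', (1 - ξ P l') * μ (ρᵢ i) l'
          = ∑ l', μ (ρᵢ i) l' - ∑ l', ξ P l' * μ (ρᵢ i) l' := by
        rw [← Finset.sum_sub_distrib]
        exact Finset.sum_congr rfl fun l' _ => by ring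
      rw [hsplit, hprob.2, hb]
      ring
    have hterm := (Finset.sum_eq_zero_iff_of_nonneg
      (fun l' _ => mul_nonneg (by linarith [(hξmem l').2]) (hprob.1 l'))).mp hzero l
      (Finset.mem_univ l)
    rcases mul_eq_zero.mp hterm with h | h
    · linarith [sub_eq_zero.mp h]
    · linarith [hi, h]
  · -- ξ P l = 0
    left
    have hb := hborn_i i
    rw [if_neg hii] at hb
    have hterm := (Finset.sum_eq_zero_iff_of_nonneg
      (fun l' _ => mul_nonneg (hξmem l').1 (hprob.1 l'))).mp hb l (Finset.mem_univ l)
    rcases mul_eq_zero.mp hterm with h | h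
    · exact h
    · linarith [hi, h]
end

section
/- Fix d ≥ 1 and a finite set Λ. Suppose μ assigns to every density matrix ρ on ℂ^d a probability distribution μ(ρ) : Λ → [0,1] and is convex-linear: μ(tρ + (1−t)σ) = t·μ(ρ) + (1−t)·μ(σ) for all t ∈ [0,1] (preparation noncontextuality). Let Q be an orthogonal projector on ℂ^d and let ξ, ξ' : Λ → {0,1} be two outcome-deterministic response functions (outcome determinism for sharp measurements being guaranteed by preparation noncontextuality) that both reproduce the statistics of Q: Σ_{λ∈Λ} ξ(λ)·μ(ρ)(λ) = Tr(Qρ) = Σ_{λ∈Λ} ξ'(λ)·μ(ρ)(λ) for every density matrix ρ. Then ξ(λ) = ξ'(λ) for every λ ∈ Λ such that μ(ρ)(λ) > 0 for some density matrix ρ. (Preparation noncontextuality implies KS-noncontextuality: operationally equivalent sharp binary measurements receive identical deterministic response functions.) -/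
/-!
Pinching `ρ` by the projector `Q`, i.e. averaging it with its conjugate under the reflection
`2Q - 1`, gives `QρQ + (1 - Q)ρ(1 - Q)`, a convex combination of a state on which `Q` occurs with
certainty and one on which it never occurs. By convex-linearity of `μ`, every ontic state `λ`
charged by `ρ` is charged by the pinched state and hence by one of these two states. On a state
whose Born probability is `0` (resp. `1`), a response function with values in `[0, 1]` that
reproduces it must vanish (resp. equal `1`) on the support of `μ`, so `ξ λ = ξ' λ`.
-/

open scoped BigOperators ComplexOrder
open Matrix

section Response

variable {Λ : Type*} [Fintype Λ] {a b : Λ → ℝ}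

theorem eq_zero_of_sum_mul_eq_zero (ha : ∀ l, 0 ≤ a l) (hb : ∀ l, 0 ≤ b l)
    (h : ∑ l, b l * a l = 0) {l : Λ} (hl : 0 < a l) : b l = 0 := by
  have := (Finset.sum_eq_zero_iff_of_nonneg fun l _ ↦ mul_nonneg (hb l) (ha l)).mp h l
    (Finset.mem_univ l)
  exact (mul_eq_zero.mp this).resolve_right hl.ne'

theorem eq_one_of_sum_mul_eq_one (ha : ∀ l, 0 ≤ a l) (hsum : ∑ l, a l = 1) (hb : ∀ l, b l ≤ 1)
    (h : ∑ l, b l * a l = 1) {l : Λ} (hl : 0 < a l) : b l = 1 := by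
  have h' : ∑ l, (1 - b l) * a l = 0 := by
    simp only [sub_mul, one_mul, Finset.sum_sub_distrib, hsum, h, sub_self]
  linarith [eq_zero_of_sum_mul_eq_zero ha (fun l ↦ sub_nonneg.mpr (hb l)) h' hl]

theorem eq_sum_mul_of_sum_mul_eq_zero_or_one (ha : ∀ l, 0 ≤ a l) (hsum : ∑ l, a l = 1)
    (hb : ∀ l, b l = 0 ∨ b l = 1) (h : ∑ l, b l * a l = 0 ∨ ∑ l, b l * a l = 1) {l : Λ}
    (hl : 0 < a l) : b l = ∑ l, b l * a l := by
  have hb0 : ∀ l, 0 ≤ b l := fun l ↦ by rcases hb l with h | h <;> simp [h]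
  have hb1 : ∀ l, b l ≤ 1 := fun l ↦ by rcases hb l with h | h <;> simp [h]
  rcases h with h | h
  · rw [h, eq_zero_of_sum_mul_eq_zero ha hb0 h hl]
  · rw [h, eq_one_of_sum_mul_eq_one ha hsum hb1 h hl]

end Response

theorem IsSelfAdjoint.add_mul_mul_star_two_mul_sub_one {R : Type*} [Ring R] [StarRing R] {p : R}
    (hp : IsSelfAdjoint p) (x : R) :
    x + (2 * p - 1) * x * star (2 * p - 1) = 2 * (p * x * p + (1 - p) * x * (1 - p)) := by
  rw [star_sub, star_mul, hp.star_eq, star_ofNat, star_one]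
  noncomm_ring

section DensityMatrix

variable {n : Type*} [Fintype n]

theorem IsStarProjection.trace_mul_mul_self {R : Type*} [CommRing R] [StarRing R]
    {Q : Matrix n n R} (hQ : IsStarProjection Q) (ρ : Matrix n n R) :
    (Q * ρ * Q).trace = (Q * ρ).trace := by
  rw [trace_mul_cycle, hQ.isIdempotentElem.eq]

theorem IsStarProjection.posSemidef_mul_mul {Q : Matrix n n ℂ} (hQ : IsStarProjection Q)
    {ρ : Matrix n n ℂ} (hρ : ρ.PosSemidef) : (Q * ρ * Q).PosSemidef := by
  have hQ' : Qᴴ = Q := hQ.isSelfAdjoint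
  simpa only [hQ'] using hρ.mul_mul_conjTranspose_same Q

theorem Matrix.PosSemidef.exists_trace_eq_ofReal {A : Matrix n n ℂ} (hA : A.PosSemidef) :
    ∃ r : ℝ, 0 ≤ r ∧ A.trace = r :=
  ⟨_, (Complex.nonneg_iff.mp hA.trace_nonneg).1,
    Complex.eq_re_of_ofReal_le (by exact_mod_cast hA.trace_nonneg)⟩

def IsDensityMatrix (ρ : Matrix n n ℂ) : Prop := ρ.PosSemidef ∧ ρ.trace = 1

theorem isDensityMatrix_inv_smul {A : Matrix n n ℂ} (hA : A.PosSemidef) {r : ℝ} (hr : 0 < r)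
    (htr : A.trace = r) : IsDensityMatrix (r⁻¹ • A) :=
  ⟨hA.smul (inv_nonneg.mpr hr.le), by
    rw [trace_smul, htr, Complex.real_smul, ← Complex.ofReal_mul, inv_mul_cancel₀ hr.ne',
      Complex.ofReal_one]⟩

theorem IsDensityMatrix.mul_mul_star [DecidableEq n] {ρ : Matrix n n ℂ}
    (hρ : IsDensityMatrix ρ) {U : Matrix n n ℂ} (hU : U ∈ unitary (Matrix n n ℂ)) :
    IsDensityMatrix (U * ρ * star U) :=
  ⟨hρ.1.mul_mul_conjTranspose_same U, by
    rw [trace_mul_cycle, Unitary.star_mul_self_of_mem hU, one_mul, hρ.2]⟩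

theorem IsDensityMatrix.exists_trace_mul_eq_ofReal [DecidableEq n] {Q : Matrix n n ℂ}
    (hQ : IsStarProjection Q) {ρ : Matrix n n ℂ} (hρ : IsDensityMatrix ρ) :
    ∃ r : ℝ, 0 ≤ r ∧ r ≤ 1 ∧ (Q * ρ).trace = r ∧ ((1 - Q) * ρ).trace = ↑(1 - r) := by
  obtain ⟨r, hr0, hr⟩ := (hQ.posSemidef_mul_mul hρ.1).exists_trace_eq_ofReal
  rw [hQ.trace_mul_mul_self] at hr
  have hP : ((1 - Q) * ρ).trace = ↑(1 - r) := by
    rw [sub_mul, one_mul, trace_sub, hρ.2, hr, Complex.ofReal_sub, Complex.ofReal_one]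
  have hP0 := (hQ.one_sub.posSemidef_mul_mul hρ.1).trace_nonneg
  rw [hQ.one_sub.trace_mul_mul_self, hP, Complex.zero_le_real] at hP0
  exact ⟨r, hr0, by linarith, hr, hP⟩

structure IsPreparationNoncontextual {Λ : Type*} [Fintype Λ] (μ : Matrix n n ℂ → Λ → ℝ) :
    Prop where
  nonneg : ∀ ρ, IsDensityMatrix ρ → ∀ l, 0 ≤ μ ρ l
  sum_eq_one : ∀ ρ, IsDensityMatrix ρ → ∑ l, μ ρ l = 1
  convex : ∀ ρ σ, IsDensityMatrix ρ → IsDensityMatrix σ → ∀ t : ℝ, 0 ≤ t → t ≤ 1 →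
    ∀ l, μ (t • ρ + (1 - t) • σ) l = t * μ ρ l + (1 - t) * μ σ l

namespace IsPreparationNoncontextual

variable {Λ : Type*} [Fintype Λ] {μ : Matrix n n ℂ → Λ → ℝ} {ρ σ : Matrix n n ℂ} {t : ℝ} {l : Λ}

theorem pos_or_pos_of_pos_mix (hμ : IsPreparationNoncontextual μ) (hρ : IsDensityMatrix ρ)
    (hσ : IsDensityMatrix σ) (ht0 : 0 ≤ t) (ht1 : t ≤ 1) (h : 0 < μ (t • ρ + (1 - t) • σ) l) :
    0 < μ ρ l ∨ 0 < μ σ l := by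
  rw [hμ.convex ρ σ hρ hσ t ht0 ht1 l] at h
  by_contra! hle
  nlinarith [hμ.nonneg ρ hρ l, hμ.nonneg σ hσ l]

theorem pos_mix_of_pos_left (hμ : IsPreparationNoncontextual μ) (hρ : IsDensityMatrix ρ)
    (hσ : IsDensityMatrix σ) (ht0 : 0 < t) (ht1 : t ≤ 1) (h : 0 < μ ρ l) :
    0 < μ (t • ρ + (1 - t) • σ) l := by
  rw [hμ.convex ρ σ hρ hσ t ht0.le ht1 l]
  nlinarith [hμ.nonneg σ hσ l]

theorem exists_trace_mul_eq_zero_or_one_of_pos [DecidableEq n]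
    (hμ : IsPreparationNoncontextual μ) {Q : Matrix n n ℂ} (hQ : IsStarProjection Q)
    (hρ : IsDensityMatrix ρ) (hl : 0 < μ ρ l) :
    ∃ σ, IsDensityMatrix σ ∧ 0 < μ σ l ∧ ((Q * σ).trace = 0 ∨ (Q * σ).trace = 1) := by
  obtain ⟨r, hr0, hr1, hQr, hPr⟩ := hρ.exists_trace_mul_eq_ofReal hQ
  rcases hr0.eq_or_lt with rfl | hr0
  · exact ⟨ρ, hρ, hl, Or.inl (by simp [hQr])⟩
  rcases hr1.eq_or_lt with rfl | hr1
  · exact ⟨ρ, hρ, hl, Or.inr (by simp [hQr])⟩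
  replace hr1 : 0 < 1 - r := sub_pos.mpr hr1
  have hσQ : IsDensityMatrix (r⁻¹ • (Q * ρ * Q)) :=
    isDensityMatrix_inv_smul (hQ.posSemidef_mul_mul hρ.1) hr0 (by rw [hQ.trace_mul_mul_self, hQr])
  have hσP : IsDensityMatrix ((1 - r)⁻¹ • ((1 - Q) * ρ * (1 - Q))) :=
    isDensityMatrix_inv_smul (hQ.one_sub.posSemidef_mul_mul hρ.1) hr1
      (by rw [hQ.one_sub.trace_mul_mul_self, hPr])
  have hUρ : IsDensityMatrix ((2 * Q - 1) * ρ * star (2 * Q - 1)) :=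
    hρ.mul_mul_star hQ.two_mul_sub_one_mem_unitary
  have hpinch : (1 / 2 : ℝ) • ρ + (1 - 1 / 2 : ℝ) • ((2 * Q - 1) * ρ * star (2 * Q - 1)) =
      r • r⁻¹ • (Q * ρ * Q) + (1 - r) • (1 - r)⁻¹ • ((1 - Q) * ρ * (1 - Q)) := by
    rw [smul_smul, smul_smul, mul_inv_cancel₀ hr0.ne', mul_inv_cancel₀ hr1.ne', one_smul,
      one_smul, show (1 - 1 / 2 : ℝ) = 1 / 2 by norm_num, ← smul_add,
      hQ.isSelfAdjoint.add_mul_mul_star_two_mul_sub_one, two_mul, smul_add, ← add_smul]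
    norm_num
  have hmix := hpinch ▸ hμ.pos_mix_of_pos_left hρ hUρ (by norm_num) (by norm_num) hl
  rcases hμ.pos_or_pos_of_pos_mix hσQ hσP hr0.le (sub_pos.mp hr1).le hmix with hQl | hPl
  · refine ⟨_, hσQ, hQl, Or.inr ?_⟩
    rw [Matrix.mul_smul, ← mul_assoc, ← mul_assoc, hQ.isIdempotentElem.eq, trace_smul,
      hQ.trace_mul_mul_self, hQr, Complex.real_smul, ← Complex.ofReal_mul,
      inv_mul_cancel₀ hr0.ne', Complex.ofReal_one]
  · refine ⟨_, hσP, hPl, Or.inl ?_⟩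
    rw [Matrix.mul_smul, ← mul_assoc, ← mul_assoc, hQ.mul_one_sub_self, zero_mul, zero_mul,
      smul_zero, trace_zero]

end IsPreparationNoncontextual

end DensityMatrix

theorem preparation_noncontextuality_implies_KS_noncontextuality_general
    (d : ℕ) (Λ : Type*) [Fintype Λ]
    (μ : Matrix (Fin d) (Fin d) ℂ → Λ → ℝ)
    (hμprob : ∀ ρ : Matrix (Fin d) (Fin d) ℂ, ρ.PosSemidef → ρ.trace = 1 →
      (∀ l, 0 ≤ μ ρ l) ∧ ∑ l, μ ρ l = 1)
    (hμconv : ∀ ρ σ : Matrix (Fin d) (Fin d) ℂ, ρ.PosSemidef → ρ.trace = 1 →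
      σ.PosSemidef → σ.trace = 1 → ∀ t : ℝ, 0 ≤ t → t ≤ 1 →
      ∀ l, μ (t • ρ + (1 - t) • σ) l = t * μ ρ l + (1 - t) * μ σ l)
    (Q : Matrix (Fin d) (Fin d) ℂ) (hQherm : Q.IsHermitian) (hQidem : Q * Q = Q)
    (ξ ξ' : Λ → ℝ)
    (hξdet : ∀ l, ξ l = 0 ∨ ξ l = 1) (hξ'det : ∀ l, ξ' l = 0 ∨ ξ' l = 1)
    (hborn : ∀ ρ : Matrix (Fin d) (Fin d) ℂ, ρ.PosSemidef → ρ.trace = 1 →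
      ((∑ l, ξ l * μ ρ l : ℝ) : ℂ) = (Q * ρ).trace)
    (hborn' : ∀ ρ : Matrix (Fin d) (Fin d) ℂ, ρ.PosSemidef → ρ.trace = 1 →
      ((∑ l, ξ' l * μ ρ l : ℝ) : ℂ) = (Q * ρ).trace) :
    ∀ l, (∃ ρ : Matrix (Fin d) (Fin d) ℂ, ρ.PosSemidef ∧ ρ.trace = 1 ∧ 0 < μ ρ l) →
      ξ l = ξ' l := by
  rintro l ⟨ρ, hρpsd, hρtr, hl⟩
  have hμ : IsPreparationNoncontextual μ :=
    ⟨fun ρ hρ ↦ (hμprob ρ hρ.1 hρ.2).1, fun ρ hρ ↦ (hμprob ρ hρ.1 hρ.2).2,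
      fun ρ σ hρ hσ ↦ hμconv ρ σ hρ.1 hρ.2 hσ.1 hσ.2⟩
  obtain ⟨σ, hσ, hσl, hsharp⟩ :=
    hμ.exists_trace_mul_eq_zero_or_one_of_pos ⟨hQidem, hQherm⟩ ⟨hρpsd, hρtr⟩ hl
  have hresponse : ∀ b : Λ → ℝ, (∀ l, b l = 0 ∨ b l = 1) →
      ((∑ l, b l * μ σ l : ℝ) : ℂ) = (Q * σ).trace → (b l : ℂ) = (Q * σ).trace := by
    intro b hb hbσ
    rw [← hbσ, eq_sum_mul_of_sum_mul_eq_zero_or_one (hμ.nonneg σ hσ) (hμ.sum_eq_one σ hσ) hb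
      (by exact_mod_cast hbσ ▸ hsharp) hσl]
  exact_mod_cast (hresponse ξ hξdet (hborn σ hσ.1 hσ.2)).trans
    (hresponse ξ' hξ'det (hborn' σ hσ.1 hσ.2)).symm

/-- **Preparation noncontextuality implies KS-noncontextuality.** Given a convex-linear
(preparation-noncontextual) assignment `μ` of finite probability distributions to density
matrices on `ℂ^d`, a projector `Q`, and two outcome-deterministic response functions `ξ, ξ'`
that both reproduce the Born statistics `Tr(Qρ)` for all density matrices `ρ`, the two
response functions agree on every ontic state in the support of some quantum state. -/
theorem preparation_noncontextuality_implies_KS_noncontextuality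
    (d : ℕ) (hd : 1 ≤ d) (Λ : Type*) [Fintype Λ]
    (μ : Matrix (Fin d) (Fin d) ℂ → Λ → ℝ)
    (hμprob : ∀ ρ : Matrix (Fin d) (Fin d) ℂ, ρ.PosSemidef → ρ.trace = 1 →
      (∀ l, 0 ≤ μ ρ l) ∧ ∑ l, μ ρ l = 1)
    (hμconv : ∀ ρ σ : Matrix (Fin d) (Fin d) ℂ, ρ.PosSemidef → ρ.trace = 1 →
      σ.PosSemidef → σ.trace = 1 → ∀ t : ℝ, 0 ≤ t → t ≤ 1 →
      ∀ l, μ (t • ρ + (1 - t) • σ) l = t * μ ρ l + (1 - t) * μ σ l)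
    (Q : Matrix (Fin d) (Fin d) ℂ) (hQherm : Q.IsHermitian) (hQidem : Q * Q = Q)
    (ξ ξ' : Λ → ℝ)
    (hξdet : ∀ l, ξ l = 0 ∨ ξ l = 1) (hξ'det : ∀ l, ξ' l = 0 ∨ ξ' l = 1)
    (hborn : ∀ ρ : Matrix (Fin d) (Fin d) ℂ, ρ.PosSemidef → ρ.trace = 1 →
      ((∑ l, ξ l * μ ρ l : ℝ) : ℂ) = (Q * ρ).trace)
    (hborn' : ∀ ρ : Matrix (Fin d) (Fin d) ℂ, ρ.PosSemidef → ρ.trace = 1 →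
      ((∑ l, ξ' l * μ ρ l : ℝ) : ℂ) = (Q * ρ).trace) :
    ∀ l, (∃ ρ : Matrix (Fin d) (Fin d) ℂ, ρ.PosSemidef ∧ ρ.trace = 1 ∧ 0 < μ ρ l) →
      ξ l = ξ' l :=
  preparation_noncontextuality_implies_KS_noncontextuality_general d Λ μ hμprob hμconv Q hQherm
    hQidem ξ ξ' hξdet hξ'det hborn hborn'
end

section
/- Let Λ be a finite set, and let E₁, …, E₉ be the nine edges of the 18-ray Kochen–Specker hypergraph. Let w : {1,…,18} → (Λ → [0,1]) be a measurement-noncontextual assignment of response functions satisfying Σ_{κ∈E_i} w_κ(λ) = 1 for every i ∈ {1,…,9} and every λ ∈ Λ. For each i ∈ {1,…,9} and each κ ∈ E_i, let μ_{i,κ} : Λ → [0,1] be a probability distribution (Σ_λ μ_{i,κ}(λ) = 1), and suppose there is a single distribution ν on Λ such that (1/4) Σ_{κ∈E_i} μ_{i,κ} = ν for every i (preparation noncontextuality applied to the operational equivalence of the nine uniform ensembles of preparations). Then the average predictability A := (1/36) Σ_{i=1}^{9} Σ_{κ∈E_i} Σ_{λ∈Λ} w_κ(λ) μ_{i,κ}(λ)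 satisfies A ≤ 5/6. -/
open scoped BigOperators

/-- The nine edges of the 18-ray Kochen–Specker hypergraph of Cabello et al.
(vertices `0,…,17` correspond to rays `1,…,18`). -/
def edges18 : Fin 9 → Finset (Fin 18) :=
  ![{0, 1, 2, 3}, {3, 4, 5, 6}, {6, 7, 8, 9}, {9, 10, 11, 12}, {12, 13, 14, 15},
    {15, 16, 17, 0}, {17, 1, 8, 10}, {2, 4, 11, 13}, {5, 7, 14, 16}]

/-!
Fix an ontic state `λ` and let `Mᵢ(λ)` be the largest response on the edge `Eᵢ`. Bounding every
response on `Eᵢ` by `Mᵢ(λ)` and using that each of the nine uniform ensembles averages to `ν`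
gives `A ≤ (1/9) ∑_λ ν(λ) ∑ᵢ Mᵢ(λ)`, so it suffices that `∑ᵢ Mᵢ ≤ 15/2`. This holds for any
weights normalized on the edges of a hypergraph with an odd number `n` of edges in which every
vertex lies in exactly two edges: then `∑ᵢ Mᵢ ≤ n - 3/2`. A choice of maximizers selects every
vertex at most twice, `n` times in total, hence an odd number of vertices exactly once, and a
vertex selected once has weight at most `1/2`.
-/

open Finset

lemma odd_card_filter_eq_one {α : Type*} [Fintype α] (f : α → ℕ) (hf : ∀ a, f a ≤ 2)
    (hodd : Odd (∑ a, f a)) : Odd #{a | f a = 1} := by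
  rw [odd_sum_iff_odd_card_odd] at hodd
  convert hodd using 3 with a
  have := hf a
  interval_cases f a <;> decide

namespace TwoRegularHypergraph

variable {ι V : Type*} {E : ι → Finset V} {w : V → ℝ}

lemma le_one_of_mem (hw0 : ∀ v, 0 ≤ w v) (hnorm : ∀ i, ∑ v ∈ E i, w v = 1) {i : ι} {v : V}
    (hv : v ∈ E i) : w v ≤ 1 :=
  hnorm i ▸ single_le_sum (fun u _ => hw0 u) hv

lemma add_le_one_of_mem [DecidableEq V] (hw0 : ∀ v, 0 ≤ w v)
    (hnorm : ∀ i, ∑ v ∈ E i, w v = 1) {i : ι} {u v : V} (hu : u ∈ E i) (hv : v ∈ E i)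
    (huv : u ≠ v) : w u + w v ≤ 1 := by
  rw [← sum_pair huv, ← hnorm i]
  exact sum_le_sum_of_subset_of_nonneg (insert_subset hu (singleton_subset_iff.2 hv))
    fun x _ _ => hw0 x

variable [Fintype ι] [DecidableEq V]

def fiberCard (s : ι → V) (v : V) : ℕ := #{i | s i = v}

variable {s : ι → V}

lemma filter_eq_subset (hs : ∀ i, s i ∈ E i) (v : V) :
    ({i | s i = v} : Finset ι) ⊆ ({i | v ∈ E i} : Finset ι) := by
  intro i hi
  simp only [mem_filter, mem_univ, true_and] at hi ⊢
  exact hi ▸ hs i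

lemma fiberCard_le_two (hdeg : ∀ v, #{i | v ∈ E i} = 2) (hs : ∀ i, s i ∈ E i) (v : V) :
    fiberCard s v ≤ 2 :=
  hdeg v ▸ card_le_card (filter_eq_subset hs v)

lemma eq_of_fiberCard_eq_two (hdeg : ∀ v, #{i | v ∈ E i} = 2) (hs : ∀ i, s i ∈ E i) {v : V}
    (hv : fiberCard s v = 2) {i : ι} (hi : v ∈ E i) : s i = v := by
  have h := eq_of_subset_of_card_le (filter_eq_subset hs v) (by rw [hdeg, ← hv, fiberCard])
  have hi' : i ∈ ({i | v ∈ E i} : Finset ι) := by simpa using hi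
  simpa [← h] using hi'

/-- The other edge through `v` selects some `u ≠ v`, and `w v ≤ w u`, `w u + w v ≤ 1`. -/
lemma le_half_of_fiberCard_eq_one (hw0 : ∀ v, 0 ≤ w v) (hnorm : ∀ i, ∑ v ∈ E i, w v = 1)
    (hdeg : ∀ v, #{i | v ∈ E i} = 2) (hs : ∀ i, s i ∈ E i)
    (hmax : ∀ i, ∀ v ∈ E i, w v ≤ w (s i)) {v : V} (hv : fiberCard s v = 1) : w v ≤ 1 / 2 := by
  obtain ⟨i, hi⟩ := card_eq_one.1 hv
  obtain ⟨j, hj, hji⟩ :=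
    (one_lt_card_iff_nontrivial.1 (by rw [hdeg v]; norm_num)).exists_ne i
  have hvj : v ∈ E j := by simpa using hj
  have hsj : s j ≠ v := by
    intro h
    have hj' : j ∈ ({i | s i = v} : Finset ι) := by simpa using h
    exact hji (by simpa [hi] using hj')
  have := hmax j v hvj
  have := add_le_one_of_mem hw0 hnorm hvj (hs j) hsj.symm
  linarith

variable [Fintype V]

lemma sum_sum_edges_eq_two_mul (hdeg : ∀ v, #{i | v ∈ E i} = 2) (f : V → ℝ) :
    ∑ i, ∑ v ∈ E i, f v = 2 * ∑ v, f v := by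
  rw [Finset.sum_comm' (t' := univ) (s' := fun v => {i | v ∈ E i}) (by simp), mul_sum]
  simp [hdeg]

lemma sum_eq_card_div_two (hdeg : ∀ v, #{i | v ∈ E i} = 2)
    (hnorm : ∀ i, ∑ v ∈ E i, w v = 1) : ∑ v, w v = Fintype.card ι / 2 := by
  have h := sum_sum_edges_eq_two_mul hdeg w
  simp only [hnorm, sum_const, card_univ, nsmul_eq_mul, mul_one] at h
  linarith

lemma sum_fiberCard (s : ι → V) : ∑ v, fiberCard s v = Fintype.card ι :=
  (card_eq_sum_card_fiberwise fun i _ => mem_univ (s i)).symm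

lemma sum_comp_eq_sum_fiberCard_mul (s : ι → V) (w : V → ℝ) :
    ∑ i, w (s i) = ∑ v, fiberCard s v * w v := by
  rw [← sum_fiberwise' univ s w]
  simp [fiberCard]

lemma sum_comp_le_card_sub_half_card (hw0 : ∀ v, 0 ≤ w v) (hnorm : ∀ i, ∑ v ∈ E i, w v = 1)
    (hdeg : ∀ v, #{i | v ∈ E i} = 2) (hs : ∀ i, s i ∈ E i)
    (hmax : ∀ i, ∀ v ∈ E i, w v ≤ w (s i)) :
    ∑ i, w (s i) ≤ Fintype.card ι - (#{v | fiberCard s v = 1} : ℝ) / 2 := by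
  have hterm : ∀ v, fiberCard s v * w v
      ≤ fiberCard s v - (if fiberCard s v = 1 then 1 else 0 : ℝ) / 2 := by
    intro v
    split_ifs with h
    · rw [h, Nat.cast_one, one_mul]
      linarith [le_half_of_fiberCard_eq_one hw0 hnorm hdeg hs hmax h]
    · obtain ⟨i, hi⟩ := card_pos.1 (hdeg v ▸ two_pos : 0 < #{i | v ∈ E i})
      have := le_one_of_mem hw0 hnorm (by simpa using hi : v ∈ E i)
      simpa using mul_le_of_le_one_right (Nat.cast_nonneg (fiberCard s v)) this
  calc ∑ i, w (s i) = ∑ v, fiberCard s v * w v := sum_comp_eq_sum_fiberCard_mul s w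
    _ ≤ ∑ v, (fiberCard s v - (if fiberCard s v = 1 then 1 else 0 : ℝ) / 2) :=
      sum_le_sum fun v _ => hterm v
    _ = Fintype.card ι - (#{v | fiberCard s v = 1} : ℝ) / 2 := by
      rw [sum_sub_distrib, ← sum_div, sum_boole, ← Nat.cast_sum, sum_fiberCard]

lemma sum_comp_le_of_fiberCard_eq_zero (hw0 : ∀ v, 0 ≤ w v) (hnorm : ∀ i, ∑ v ∈ E i, w v = 1)
    (hdeg : ∀ v, #{i | v ∈ E i} = 2) (hs : ∀ i, s i ∈ E i) {i₀ : ι}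
    (hone : fiberCard s (s i₀) = 1) (hzero : ∀ u ∈ E i₀, u ≠ s i₀ → fiberCard s u = 0) :
    ∑ i, w (s i) ≤ Fintype.card ι - 2 + w (s i₀) := by
  have hin : ∑ v ∈ E i₀, fiberCard s v * w v = w (s i₀) := by
    rw [sum_eq_single_of_mem (s i₀) (hs i₀) fun u hu hne => by simp [hzero u hu hne], hone,
      Nat.cast_one, one_mul]
  have hout : ∑ v ∈ (E i₀)ᶜ, fiberCard s v * w v ≤ 2 * ∑ v ∈ (E i₀)ᶜ, w v := by
    rw [mul_sum]
    exact sum_le_sum fun v _ => mul_le_mul_of_nonneg_right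
      (by exact_mod_cast fiberCard_le_two hdeg hs v) (hw0 v)
  have hrest : ∑ v ∈ (E i₀)ᶜ, w v = Fintype.card ι / 2 - 1 := by
    rw [← sum_eq_card_div_two hdeg hnorm, ← sum_compl_add_sum (E i₀), hnorm]
    ring
  rw [sum_comp_eq_sum_fiberCard_mul, ← sum_compl_add_sum (E i₀)]
  linarith

/-- Since the selection multiplicities are at most `2` and sum to the odd number of edges, an odd
number of vertices is selected exactly once: either three of them, each costing `1/2`, or a
single one `s i₀`, whose edge-mates in `E i₀` are then never selected. -/
theorem sum_comp_le_card_sub_three_halves (hw0 : ∀ v, 0 ≤ w v)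
    (hnorm : ∀ i, ∑ v ∈ E i, w v = 1) (hdeg : ∀ v, #{i | v ∈ E i} = 2)
    (hodd : Odd (Fintype.card ι)) (hs : ∀ i, s i ∈ E i) (hmax : ∀ i, ∀ v ∈ E i, w v ≤ w (s i)) :
    ∑ i, w (s i) ≤ Fintype.card ι - 3 / 2 := by
  have hL : Odd #{v | fiberCard s v = 1} :=
    odd_card_filter_eq_one _ (fiberCard_le_two hdeg hs) (by rwa [sum_fiberCard])
  obtain hL3 | hL1 : 3 ≤ #{v | fiberCard s v = 1} ∨ #{v | fiberCard s v = 1} = 1 := by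
    obtain ⟨k, hk⟩ := hL
    omega
  · have := sum_comp_le_card_sub_half_card hw0 hnorm hdeg hs hmax
    have : (3 : ℝ) ≤ #{v | fiberCard s v = 1} := by exact_mod_cast hL3
    linarith
  obtain ⟨v₀, hv₀⟩ := card_eq_one.1 hL1
  have hm₀ : fiberCard s v₀ = 1 := by simpa using hv₀.ge (mem_singleton_self v₀)
  obtain ⟨i₀, rfl⟩ : ∃ i₀, s i₀ = v₀ := by
    obtain ⟨i₀, hi₀⟩ := card_pos.1 (hm₀ ▸ one_pos : 0 < fiberCard s v₀)
    exact ⟨i₀, by simpa using hi₀⟩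
  have hzero : ∀ u ∈ E i₀, u ≠ s i₀ → fiberCard s u = 0 := by
    intro u hu hne
    have h₁ : fiberCard s u ≠ 1 := fun h => hne (by simpa [hv₀] using
      (by simpa using h : u ∈ ({v | fiberCard s v = 1} : Finset V)))
    have h₂ : fiberCard s u ≠ 2 := fun h => hne (eq_of_fiberCard_eq_two hdeg hs h hu).symm
    have := fiberCard_le_two hdeg hs u
    omega
  have := sum_comp_le_of_fiberCard_eq_zero hw0 hnorm hdeg hs hm₀ hzero
  have := le_half_of_fiberCard_eq_one hw0 hnorm hdeg hs hmax hm₀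
  linarith

theorem sum_sum_mul_le (hw0 : ∀ v, 0 ≤ w v) (hnorm : ∀ i, ∑ v ∈ E i, w v = 1)
    (hdeg : ∀ v, #{i | v ∈ E i} = 2) (hodd : Odd (Fintype.card ι)) (μ : ι → V → ℝ)
    (hμ : ∀ i, ∀ v ∈ E i, 0 ≤ μ i v) {c : ℝ} (hc : ∀ i, ∑ v ∈ E i, μ i v = c) :
    ∑ i, ∑ v ∈ E i, w v * μ i v ≤ (Fintype.card ι - 3 / 2) * c := by
  choose s hs hmax using fun i =>
    exists_max_image (E i) w (nonempty_of_sum_ne_zero (f := w) (by simp [hnorm i]))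
  obtain ⟨i₀⟩ : Nonempty ι := Fintype.card_pos_iff.1 hodd.pos
  have hc0 : 0 ≤ c := hc i₀ ▸ sum_nonneg (hμ i₀)
  calc ∑ i, ∑ v ∈ E i, w v * μ i v ≤ ∑ i, w (s i) * ∑ v ∈ E i, μ i v :=
        sum_le_sum fun i _ => mul_sum (E i) (μ i) (w (s i)) ▸
          sum_le_sum fun v hv => mul_le_mul_of_nonneg_right (hmax i v hv) (hμ i v hv)
    _ = (∑ i, w (s i)) * c := by simp only [hc, sum_mul]
    _ ≤ (Fintype.card ι - 3 / 2) * c :=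
      mul_le_mul_of_nonneg_right
        (sum_comp_le_card_sub_three_halves hw0 hnorm hdeg hodd hs hmax) hc0

end TwoRegularHypergraph

open TwoRegularHypergraph

/-- **The noncontextuality inequality for the 18-ray Kochen–Specker construction.** For any
measurement-noncontextual assignment `w` of response functions to the 18 equivalence classes
of measurement events, normalized on each of the nine measurements, and any preparation
distributions `μ i κ` whose nine uniform ensemble averages are all equal to a single
distribution `ν` (preparation noncontextuality), the average predictability `A` is at most
`5/6`. -/
theorem eighteen_ray_noncontextuality_inequality
    (Λ : Type*) [Fintype Λ]
    (w : Fin 18 → Λ → ℝ)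
    (hw01 : ∀ κ l, w κ l ∈ Set.Icc (0 : ℝ) 1)
    (hwnorm : ∀ i l, ∑ κ ∈ edges18 i, w κ l = 1)
    (μ : Fin 9 → Fin 18 → Λ → ℝ)
    (hμ : ∀ i, ∀ κ ∈ edges18 i, (∀ l, 0 ≤ μ i κ l) ∧ ∑ l, μ i κ l = 1)
    (ν : Λ → ℝ)
    (hν : ∀ i l, (1 / 4 : ℝ) * ∑ κ ∈ edges18 i, μ i κ l = ν l) :
    (1 / 36 : ℝ) * ∑ i, ∑ κ ∈ edges18 i, ∑ l, w κ l * μ i κ l ≤ 5 / 6 := by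
  have hdeg : ∀ v, #{i | v ∈ edges18 i} = 2 := by decide
  have hsum : ∀ i l, ∑ κ ∈ edges18 i, μ i κ l = 4 * ν l := fun i l => by
    rw [← hν i l]
    ring
  have hν_sum : ∑ l, ν l = 1 := by
    have : ∑ κ ∈ edges18 0, ∑ l, μ 0 κ l = 4 := by
      rw [sum_congr rfl fun κ hκ => (hμ 0 κ hκ).2, sum_const, nsmul_one,
        show #(edges18 0) = 4 from rfl, Nat.cast_ofNat]
    simp_rw [← hν 0, ← mul_sum]
    rw [sum_comm, this]
    norm_num
  have hpoint : ∀ l, ∑ i, ∑ κ ∈ edges18 i, w κ l * μ i κ l ≤ 30 * ν l := fun l => by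
    have := sum_sum_mul_le (fun κ => (hw01 κ l).1) (fun i => hwnorm i l) hdeg (by decide)
      (fun i κ => μ i κ l) (fun i κ hκ => (hμ i κ hκ).1 l) (hsum · l)
    rw [Fintype.card_fin] at this
    linarith
  calc (1 / 36 : ℝ) * ∑ i, ∑ κ ∈ edges18 i, ∑ l, w κ l * μ i κ l
      = (1 / 36) * ∑ l, ∑ i, ∑ κ ∈ edges18 i, w κ l * μ i κ l := by
        simp_rw [sum_comm (s := edges18 _) (t := univ)]
        rw [sum_comm]
    _ ≤ (1 / 36) * ∑ l, 30 * ν l := by gcongr with l; exact hpoint l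
    _ = 5 / 6 := by rw [← mul_sum, hν_sum]; norm_num
end

section
/- Let n be an odd positive integer and let Π₁, …, Π_n be orthogonal projectors on ℂ^d (Hermitian d×d complex matrices with Π_i² = Π_i) satisfying the cyclic orthogonality relations Π_i Π_{i⊕1} = 0 for all i ∈ {1,…,n}, where i⊕1 denotes addition of indices modulo n. Then there exists no density matrix ρ on ℂ^d (positive semidefinite with Tr ρ = 1) such that Tr(ρ Π_i) = 1/2 for all i ∈ {1,…,n}. -/
open scoped ComplexOrder
open Matrix

/-- If `Tr(Mᴴ M) = 0` then `M = 0` (Frobenius norm argument). -/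
lemma trace_conjTranspose_mul_self_eq_zero' {m : Type*} [Fintype m] [DecidableEq m]
    (M : Matrix m m ℂ) (h : (Mᴴ * M).trace = 0) : M = 0 := by
  have h' : ∀ j ∈ Finset.univ, (0 : ℂ) ≤ (Mᴴ * M) j j := fun j _ => by
    simp only [Matrix.mul_apply, Matrix.conjTranspose_apply]
    exact Finset.sum_nonneg fun i _ => star_mul_self_nonneg _
  have hz := (Finset.sum_eq_zero_iff_of_nonneg h').mp h
  ext i j
  have := hz j (Finset.mem_univ j)
  simp only [Matrix.mul_apply, Matrix.conjTranspose_apply] at this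
  have h2 : ∀ i ∈ Finset.univ, (0 : ℂ) ≤ star (M i j) * M i j :=
    fun i _ => star_mul_self_nonneg _
  have := (Finset.sum_eq_zero_iff_of_nonneg h2).mp this i (Finset.mem_univ i)
  have := mul_eq_zero.mp this
  rcases this with h3 | h3
  · simpa using congrArg star h3
  · simpa using h3

open scoped MatrixOrder in
/-- If `A, B` are PSD and `Tr(A B) = 0` then `A B = 0`. -/
lemma psd_mul_eq_zero_of_trace_eq_zero {m : Type*} [Fintype m] [DecidableEq m]
    {A B : Matrix m m ℂ} (hA : A.PosSemidef) (hB : B.PosSemidef)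
    (h : (A * B).trace = 0) : A * B = 0 := by
  set a := CFC.sqrt A with ha
  set b := CFC.sqrt B with hb
  have haH : aᴴ = a := (CFC.sqrt_nonneg A).posSemidef.isHermitian
  have hbH : bᴴ = b := (CFC.sqrt_nonneg B).posSemidef.isHermitian
  have haa : a * a = A := CFC.sqrt_mul_sqrt_self A hA.nonneg
  have hbb : b * b = B := CFC.sqrt_mul_sqrt_self B hB.nonneg
  have key : ((b * a)ᴴ * (b * a)).trace = 0 := by
    have : (b * a)ᴴ * (b * a) = a * (b * b) * a := by
      rw [Matrix.conjTranspose_mul, haH, hbH]; noncomm_ring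
    rw [this, hbb]
    calc (a * B * a).trace = (a * (B * a)).trace := by rw [Matrix.mul_assoc]
      _ = ((B * a) * a).trace := Matrix.trace_mul_comm _ _
      _ = (B * A).trace := by rw [Matrix.mul_assoc, haa]
      _ = (A * B).trace := Matrix.trace_mul_comm _ _
      _ = 0 := h
  have hba : b * a = 0 := trace_conjTranspose_mul_self_eq_zero' _ key
  have hBA : B * A = 0 := by
    rw [← hbb, ← haa, Matrix.mul_assoc, ← Matrix.mul_assoc b a a, ← Matrix.mul_assoc b, hba]
    simp
  calc A * B = (B * A)ᴴ := by
        rw [Matrix.conjTranspose_mul, hA.isHermitian, hB.isHermitian]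
    _ = 0 := by rw [hBA]; simp

/-- **No quantum state assigns probability 1/2 to every projector of an odd cycle.** If
`P 0, …, P (n−1)` are projectors on `ℂ^d`, orthogonal in cyclically contiguous pairs, and `n`
is odd, then there is no density matrix `ρ` with `Tr(ρ P i) = 1/2` for all `i`. -/
theorem no_half_valuation_on_odd_projector_cycle
    (d n : ℕ) (hodd : Odd n) (hpos : 0 < n)
    (P : ZMod n → Matrix (Fin d) (Fin d) ℂ)
    (hherm : ∀ i, (P i).IsHermitian)
    (hidem : ∀ i, P i * P i = P i)
    (horth : ∀ i, P i * P (i + 1) = 0) :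
    ¬ ∃ ρ : Matrix (Fin d) (Fin d) ℂ, ρ.PosSemidef ∧ ρ.trace = 1 ∧
      ∀ i, (ρ * P i).trace = 1 / 2 := by
  rintro ⟨ρ, hρ, hρ1, htr⟩
  -- the reverse orthogonality relations
  have horth' : ∀ i, P (i + 1) * P i = 0 := fun i => by
    have := congrArg Matrix.conjTranspose (horth i)
    rwa [Matrix.conjTranspose_mul, (hherm i).eq, (hherm (i + 1)).eq,
      Matrix.conjTranspose_zero] at this
  -- Q i = P i + P (i+1) is a projector
  set Q : ZMod n → Matrix (Fin d) (Fin d) ℂ := fun i => P i + P (i + 1) with hQ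
  have hQidem : ∀ i, Q i * Q i = Q i := fun i => by
    simp only [hQ, add_mul, mul_add, hidem, horth, horth', add_zero, zero_add]
  have hQherm : ∀ i, (Q i).IsHermitian := fun i => (hherm i).add (hherm (i + 1))
  -- 1 - Q i is PSD
  have hRpsd : ∀ i, (1 - Q i).PosSemidef := fun i => by
    have hRH : (1 - Q i)ᴴ = 1 - Q i := by
      rw [Matrix.conjTranspose_sub, Matrix.conjTranspose_one, (hQherm i).eq]
    have hRidem : (1 - Q i) * (1 - Q i) = 1 - Q i := by
      have := hQidem i
      noncomm_ring [this]
    have : 1 - Q i = (1 - Q i)ᴴ * (1 - Q i) := by rw [hRH, hRidem]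
    rw [this]
    exact Matrix.posSemidef_conjTranspose_mul_self _
  -- ρ (1 - Q i) has trace zero, hence ρ = ρ Q i
  have hsupp : ∀ i, ρ * Q i = ρ := fun i => by
    have htr0 : (ρ * (1 - Q i)).trace = 0 := by
      rw [Matrix.mul_sub, Matrix.mul_one, hQ]
      simp only [Matrix.mul_add]
      rw [Matrix.trace_sub, Matrix.trace_add, hρ1, htr i, htr (i + 1)]
      norm_num
    have := psd_mul_eq_zero_of_trace_eq_zero hρ (hRpsd i) htr0
    rw [Matrix.mul_sub, Matrix.mul_one, sub_eq_zero] at this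
    exact this.symm
  -- hence ρ P (i+2) = ρ P i
  have hstep : ∀ i, ρ * P (i + 2) = ρ * P i := fun i => by
    have h1 : ρ * P i + ρ * P (i + 1) = ρ := by
      have := hsupp i; rwa [hQ, Matrix.mul_add] at this
    have h2 : ρ * P (i + 1) + ρ * P (i + 2) = ρ := by
      have := hsupp (i + 1)
      rw [hQ, Matrix.mul_add] at this
      rwa [show i + 1 + 1 = i + 2 by ring] at this
    have := h1.trans h2.symm
    linear_combination (norm := noncomm_ring) -this
  -- by induction: ρ P (2k) = ρ P 0
  have hiter : ∀ k : ℕ, ρ * P ((2 * k : ℕ) : ZMod n) = ρ * P 0 := by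
    intro k
    induction k with
    | zero => norm_num
    | succ k ih =>
      have hcast : (((2 * (k + 1) : ℕ)) : ZMod n) = ((2 * k : ℕ) : ZMod n) + 2 := by
        push_cast; ring
      rw [hcast, hstep, ih]
  -- since n is odd, 2 * ((n+1)/2) = n + 1 ≡ 1, so ρ P 1 = ρ P 0
  obtain ⟨m, hm⟩ := hodd
  have h2m : 2 * ((n + 1) / 2) = n + 1 := by omega
  have h1 : ρ * P 1 = ρ * P 0 := by
    have := hiter ((n + 1) / 2)
    rwa [h2m, show ((n + 1 : ℕ) : ZMod n) = 1 by push_cast; simp] at this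
  -- conclude ρ P 1 = 0, contradicting trace 1/2
  have h0 : ρ * P 1 = 0 := by
    calc ρ * P 1 = ρ * P 1 * P 1 := by rw [Matrix.mul_assoc, hidem]
      _ = ρ * P 0 * P 1 := by rw [h1]
      _ = ρ * (P 0 * P (0 + 1)) := by rw [Matrix.mul_assoc, zero_add]
      _ = 0 := by rw [horth]; simp
  have := htr 1
  rw [h0, Matrix.trace_zero] at this
  norm_num at this
end

section
/- Let Λ be a finite set. Let ξ₁, ξ₂, ξ₃ : Λ → [0,1] be response functions (ξ_t(λ) is the probability of outcome 0 of measurement M_t in ontic state λ) satisfying (1/3)(ξ₁(λ) + ξ₂(λ) + ξ₃(λ)) = 1/2 for every λ ∈ Λ (measurement noncontextuality applied to the operational equivalence of the uniform mixture M_* of the three measurements with a fair coin flip). For each t ∈ {1,2,3} and b ∈ {0,1} let μ_{t,b} : Λ → [0,1] be a probability distribution, and suppose the mixtures ½(μ_{t,0} + μ_{t,1}) are equal to one and the same distribution ν for all t ∈ {1,2,3} (preparation noncontextuality applied to the operational equivalence of the three two-element ensembles). Then A' := (1/6) Σ_{t=1}^{3} [ Σ_{λ} ξ_t(λ) μ_{t,0}(λ)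 + Σ_{λ} (1 − ξ_t(λ)) μ_{t,1}(λ) ] ≤ 5/6. (The fair-coin-flip noncontextuality inequality.) -/
/-
Outcome and label agree with probability `ξ μ₀ + (1 - ξ) μ₁` and disagree with probability
`ξ μ₁ + (1 - ξ) μ₀`; in every ontic state the two add up to `μ₀ + μ₁ = 2ν`. The disagreement is
at least `min ξ (1 - ξ) · 2ν`, and three numbers in `[0, 1]` with sum `3/2` have
`∑ min ξ (1 - ξ) ≥ 1/2`. Hence in every ontic state the total disagreement over the three
measurements is at least `ν`, the total agreement at most `5ν`, and summing over `Λ` gives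
`6 A' ≤ 5`.
-/

open Finset

lemma min_mul_add_le_mul_add_mul {a p q : ℝ} (hp : 0 ≤ p) (hq : 0 ≤ q) :
    min a (1 - a) * (p + q) ≤ a * p + (1 - a) * q := by
  rcases le_total a (1 - a) with h | h
  · rw [min_eq_left h]
    nlinarith
  · rw [min_eq_right h]
    nlinarith

lemma one_half_le_sum_min_one_sub {x y z : ℝ} (hx : x ∈ Set.Icc (0 : ℝ) 1)
    (hy : y ∈ Set.Icc (0 : ℝ) 1) (hz : z ∈ Set.Icc (0 : ℝ) 1) (hsum : x + y + z = 3 / 2) :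
    1 / 2 ≤ min x (1 - x) + min y (1 - y) + min z (1 - z) := by
  obtain ⟨hx0, hx1⟩ := hx
  obtain ⟨hy0, hy1⟩ := hy
  obtain ⟨hz0, hz1⟩ := hz
  rcases le_total x (1 - x) with h | h <;> rcases le_total y (1 - y) with h' | h' <;>
    rcases le_total z (1 - z) with h'' | h'' <;>
    simp only [min_eq_left, min_eq_right, *] <;> linarith

lemma sum_agreement_le_five_mul {ξ : Fin 3 → ℝ} (hξ : ∀ t, ξ t ∈ Set.Icc (0 : ℝ) 1)
    (hξsum : ξ 0 + ξ 1 + ξ 2 = 3 / 2) {p : Fin 3 → Bool → ℝ} (hp : ∀ t b, 0 ≤ p t b) {ν : ℝ}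
    (hν : ∀ t, p t false + p t true = 2 * ν) :
    ∑ t, (ξ t * p t false + (1 - ξ t) * p t true) ≤ 5 * ν := by
  have hν0 : 0 ≤ ν := by linarith [hν 0, hp 0 false, hp 0 true]
  have hsplit : ∀ t, (ξ t * p t false + (1 - ξ t) * p t true)
      + (ξ t * p t true + (1 - ξ t) * p t false) = 2 * ν := fun t => by
    linear_combination hν t
  have hdisagree : ∀ t, min (ξ t) (1 - ξ t) * (2 * ν) ≤ ξ t * p t true + (1 - ξ t) * p t false :=
    fun t => by
      rw [← hν t, add_comm]
      exact min_mul_add_le_mul_add_mul (hp t true) (hp t false)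
  have hmin := one_half_le_sum_min_one_sub (hξ 0) (hξ 1) (hξ 2) hξsum
  rw [Fin.sum_univ_three]
  nlinarith [hsplit 0, hsplit 1, hsplit 2, hdisagree 0, hdisagree 1, hdisagree 2]

/-- **The fair-coin-flip noncontextuality inequality.** Given three response functions whose
uniform mixture is the fair coin flip on every ontic state (measurement noncontextuality) and
six preparation distributions whose three pairwise uniform mixtures coincide (preparation
noncontextuality), the average correlation `A'` between outcome and preparation label is at
most `5/6`. (Outcome/label `0` is encoded by `false` and `1` by `true`; `ξ t l` is the
probability of outcome `0` of measurement `M t` in ontic state `l`.) -/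
theorem fair_coin_flip_noncontextuality_inequality
    (Λ : Type*) [Fintype Λ]
    (ξ : Fin 3 → Λ → ℝ)
    (hξ01 : ∀ t l, ξ t l ∈ Set.Icc (0 : ℝ) 1)
    (hmnc : ∀ l, (1 / 3 : ℝ) * (ξ 0 l + ξ 1 l + ξ 2 l) = 1 / 2)
    (μ : Fin 3 → Bool → Λ → ℝ)
    (hμ : ∀ t b, (∀ l, 0 ≤ μ t b l) ∧ ∑ l, μ t b l = 1)
    (ν : Λ → ℝ)
    (hpnc : ∀ t l, (1 / 2 : ℝ) * (μ t false l + μ t true l) = ν l) :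
    (1 / 6 : ℝ) * ∑ t : Fin 3,
        ((∑ l, ξ t l * μ t false l) + ∑ l, (1 - ξ t l) * μ t true l) ≤ 5 / 6 := by
  have hν : ∀ t l, μ t false l + μ t true l = 2 * ν l := fun t l => by
    linear_combination 2 * hpnc t l
  have hνsum : ∑ l, ν l = 1 := by
    have h := Finset.sum_congr rfl fun l (_ : l ∈ univ) => hν 0 l
    rw [sum_add_distrib, (hμ 0 false).2, (hμ 0 true).2, ← mul_sum] at h
    linarith
  have hpoint : ∀ l, ∑ t, (ξ t l * μ t false l + (1 - ξ t l) * μ t true l) ≤ 5 * ν l :=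
    fun l => sum_agreement_le_five_mul (fun t => hξ01 t l) (by linarith [hmnc l])
      (fun t b => (hμ t b).1 l) (fun t => hν t l)
  calc (1 / 6 : ℝ) * ∑ t : Fin 3,
        ((∑ l, ξ t l * μ t false l) + ∑ l, (1 - ξ t l) * μ t true l)
      = 1 / 6 * ∑ l, ∑ t, (ξ t l * μ t false l + (1 - ξ t l) * μ t true l) := by
        simp only [← sum_add_distrib]
        rw [sum_comm]
    _ ≤ 1 / 6 * ∑ l, 5 * ν l := by gcongr with l; exact hpoint l
    _ = 5 / 6 := by rw [← mul_sum, hνsum]; norm_num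
end
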